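/- arXiv:2405.13774 — 3 statements merged into one kernel-verified Lean document; each statement's English description precedes it below -/
import Mathlib

section
/- Let W be a Weyl group, α_i a simple root, α a positive root, and w ∈ W. If w covers both ws_i and s_α w in Bruhat order, and ws_i ≠ s_α w, then both ws_i and s_α w cover s_α w s_i in Bruhat order. -/
open CoxeterSystem Pointwise

namespace PaperFormal

variable {B W : Type*} [Group W] {M : CoxeterMatrix B}

/-- The (strong) Bruhat order on a Coxeter group: generated by `x < t * x`
for reflections `t` when the length increases. -/
def bruhatLE (cs : CoxeterSystem M W) (u v : W) : Prop :=
  Relation.ReflTransGen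
    (fun x y => ∃ t : W, cs.IsReflection t ∧ y = t * x ∧ cs.length x < cs.length y) u v

/-- Bruhat covering relation: `u < v` with `ℓ(v) = ℓ(u) + 1`. -/
def bruhatCovers (cs : CoxeterSystem M W) (u v : W) : Prop :=
  bruhatLE cs u v ∧ cs.length v = cs.length u + 1

/-- The standard parabolic subgroup generated by the simple reflections indexed by `I`. -/
def WI (cs : CoxeterSystem M W) (I : Set B) : Subgroup W :=
  Subgroup.closure (cs.simple '' I)

/-- `d` is a minimal-length representative of the coset `W_I d`. -/
def IsMinRight (cs : CoxeterSystem M W) (I : Set B) (d : W) : Prop :=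
  ∀ a ∈ WI cs I, cs.length d ≤ cs.length (a * d)

/-- `x` is the longest element of the parabolic subgroup `W_I`. -/
def IsLongest (cs : CoxeterSystem M W) (I : Set B) (x : W) : Prop :=
  x ∈ WI cs I ∧ ∀ y ∈ WI cs I, cs.length y ≤ cs.length x

/-- The support of `w`: simple generators appearing in some reduced word of `w`. -/
def SuppSet (cs : CoxeterSystem M W) (w : W) : Set B :=
  {i | ∃ l : List B, cs.wordProd l = w ∧ l.length = cs.length w ∧ i ∈ l}

/-- The number of distinct simple reflections appearing in reduced words of `w`. -/
noncomputable def supp (cs : CoxeterSystem M W) (w : W) : ℕ :=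
  (SuppSet cs w).ncard

/-- A geometric realization of the Weyl group `W` on a real vector space `V`
containing a root system: positive roots, reflections `s_α` for positive
roots `α`, coroots, and simple roots. -/
structure Realization (cs : CoxeterSystem M W) (V : Type*) [AddCommGroup V]
    [Module ℝ V] where
  /-- the action of `W` on the root space -/
  act : W →* (V ≃ₗ[ℝ] V)
  /-- the set of positive roots `Φ⁺` -/
  pos : Set V
  /-- the reflection `s_α` associated to a positive root `α` -/
  reflOf : V → W
  /-- the coroot pairing `⟨·, α∨⟩` -/
  coroot : V → (V →ₗ[ℝ] ℝ)
  reflOf_isReflection : ∀ α ∈ pos, cs.IsReflection (reflOf α)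
  reflOf_surjOn : ∀ t : W, cs.IsReflection t → ∃ α ∈ pos, reflOf α = t
  reflOf_injOn : ∀ α ∈ pos, ∀ β ∈ pos, reflOf α = reflOf β → α = β
  act_reflOf : ∀ α ∈ pos, ∀ v : V, act (reflOf α) v = v - coroot α v • α
  coroot_self : ∀ α ∈ pos, coroot α α = 2
  neg_not_pos : ∀ α ∈ pos, -α ∉ pos
  act_pos : ∀ w : W, ∀ α ∈ pos, act w α ∈ pos ∨ -(act w α) ∈ pos
  /-- the simple roots `α_i` -/
  simpleRoot : B → V
  simpleRoot_pos : ∀ i, simpleRoot i ∈ pos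
  reflOf_simpleRoot : ∀ i, reflOf (simpleRoot i) = cs.simple i

variable {V : Type*} [AddCommGroup V] [Module ℝ V]

/-- The labels of the edges of the Bruhat graph restricted to the interval `[u,v]`:
positive roots `α` such that some edge `x — s_α x` has both endpoints in `[u,v]`. -/
def edgeLabels (cs : CoxeterSystem M W) (R : Realization cs V) (u v : W) : Set V :=
  {α | α ∈ R.pos ∧ ∃ x : W, bruhatLE cs u x ∧ bruhatLE cs (R.reflOf α * x) v ∧
    cs.length x < cs.length (R.reflOf α * x)}

/-- `AD(u,v)`: the `ℝ`-span of all edge labels of the Bruhat graph on `[u,v]`. -/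
def AD (cs : CoxeterSystem M W) (R : Realization cs V) (u v : W) : Submodule ℝ V :=
  Submodule.span ℝ (edgeLabels cs R u v)

/-- `ad(u,v) = dim AD(u,v)`, the algebraic dimension of the Bruhat interval. -/
noncomputable def adim (cs : CoxeterSystem M W) (R : Realization cs V) (u v : W) : ℕ :=
  Module.finrank ℝ (AD cs R u v)

/-- The left inversion set `I_L(w) = {α ∈ Φ⁺ : w⁻¹(α) ∈ Φ⁻}`. -/
def invL (cs : CoxeterSystem M W) (R : Realization cs V) (w : W) : Set V :=
  {α | α ∈ R.pos ∧ -(R.act w⁻¹ α) ∈ R.pos}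

end PaperFormal

open PaperFormal

namespace StrongExchangeAux

open List

variable {B W : Type*} [Group W] [DecidableEq W] {M : CoxeterMatrix B} (cs : CoxeterSystem M W)

local prefix:100 "ℓ" => cs.length
local prefix:100 "σ" => cs.simple
local prefix:100 "π" => cs.wordProd

/-- the sign-representation function on `W × ℤˣ` -/
def phiFun (i : B) : W × ℤˣ → W × ℤˣ :=
  fun p => (σ i * p.1 * σ i, if p.1 = σ i then -p.2 else p.2)

lemma simple_conj_eq_iff (i : B) (x : W) : σ i * x * σ i = σ i ↔ x = σ i := by
  constructor
  · intro h
    have h2 : σ i * x * σ i * σ i = σ i * σ i := by rw [h]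
    rw [cs.simple_mul_simple_cancel_right] at h2
    exact mul_left_cancel h2
  · rintro rfl
    rw [cs.simple_mul_simple_cancel_right]

lemma phiFun_involutive (i : B) : Function.Involutive (phiFun cs i) := by
  rintro ⟨x, e⟩
  simp only [phiFun]
  by_cases h : x = σ i
  · subst h
    simp [cs.simple_mul_simple_cancel_right]
  · rw [if_neg h, if_neg (by rw [simple_conj_eq_iff]; exact h)]
    have hx : σ i * (σ i * x * σ i) * σ i = x := by
      simp [mul_assoc, cs.simple_mul_simple_cancel_left, cs.simple_mul_simple_self]
    rw [hx]

/-- the sign representation permutation -/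
def phi (i : B) : Equiv.Perm (W × ℤˣ) := (phiFun_involutive cs i).toPerm

lemma phi_apply (i : B) (p : W × ℤˣ) : phi cs i p = phiFun cs i p := rfl

lemma prod_map_phi (ω : List B) (t : W) (ε : ℤˣ) :
    (ω.map (phi cs)).prod (t, ε) =
      (π ω * t * (π ω)⁻¹, ε * (-1) ^ ((cs.rightInvSeq ω).count t)) := by
  induction ω with
  | nil => simp
  | cons i ω ih =>
    rw [map_cons, prod_cons, Equiv.Perm.mul_apply, ih, phi_apply]
    have hris : cs.rightInvSeq (i :: ω) = ((π ω)⁻¹ * σ i * π ω) :: cs.rightInvSeq ω := rfl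
    have hconj : (π ω * t * (π ω)⁻¹ = σ i) ↔ (t = (π ω)⁻¹ * σ i * π ω) := by
      constructor
      · intro h; rw [← h]; group
      · intro h; rw [h]; group
    simp only [phiFun, hris, count_cons, cs.wordProd_cons, beq_iff_eq]
    by_cases h : t = (π ω)⁻¹ * σ i * π ω
    · rw [if_pos (hconj.mpr h), if_pos (by exact h.symm)]
      refine Prod.ext ?_ ?_
      · show σ i * (π ω * t * (π ω)⁻¹) * σ i = σ i * π ω * t * (σ i * π ω)⁻¹
        rw [mul_inv_rev, cs.inv_simple]; group
      · show -(ε * (-1) ^ count t (cs.rightInvSeq ω)) =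
          ε * (-1) ^ (count t (cs.rightInvSeq ω) + 1)
        rw [pow_succ, mul_neg_one, mul_neg]
    · rw [if_neg (fun hc => h (hconj.mp hc)), if_neg (fun hc => h hc.symm)]
      refine Prod.ext ?_ ?_
      · show σ i * (π ω * t * (π ω)⁻¹) * σ i = σ i * π ω * t * (σ i * π ω)⁻¹
        rw [mul_inv_rev, cs.inv_simple]; group
      · simp

lemma alt_two_mul_succ (i j : B) (m : ℕ) :
    alternatingWord i j (2 * (m + 1)) = i :: j :: alternatingWord i j (2 * m) := by
  have h1 : 2 * (m + 1) = (2 * m + 1) + 1 := by ring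
  rw [h1, alternatingWord_succ', alternatingWord_succ']
  simp [Nat.even_add_one, Nat.even_mul]

lemma prod_map_phi_alt (i j : B) (m : ℕ) :
    ((alternatingWord i j (2 * m)).map (phi cs)).prod = (phi cs i * phi cs j) ^ m := by
  induction m with
  | zero => simp [alternatingWord]
  | succ m ih =>
    rw [alt_two_mul_succ, map_cons, map_cons, prod_cons, prod_cons, ih, pow_succ']
    rw [mul_assoc]

lemma sj_pow (i j : B) (a : ℕ) :
    σ j * (σ i * σ j) ^ a = (σ j * σ i) ^ a * σ j := by
  induction a with
  | zero => simp
  | succ a ih =>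
    rw [pow_succ, ← mul_assoc, ih, pow_succ]
    group

lemma inv_pow_simple (i j : B) (a : ℕ) : ((σ i * σ j) ^ a)⁻¹ = (σ j * σ i) ^ a := by
  rw [← inv_pow, mul_inv_rev, cs.inv_simple, cs.inv_simple]

lemma g_eq (i j : B) (n : ℕ) :
    (π (alternatingWord i j n))⁻¹ * π (alternatingWord i j (n + 1))
      = (σ j * σ i) ^ n * σ j := by
  rcases Nat.even_or_odd n with ⟨a, ha⟩ | ⟨a, ha⟩
  · subst ha
    have hn : a + a = 2 * a := by ring
    rw [hn, cs.prod_alternatingWord_eq_mul_pow, cs.prod_alternatingWord_eq_mul_pow]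
    rw [if_pos (by exact ⟨a, by ring⟩), if_neg (by simp [Nat.even_add_one, parity_simps])]
    have h2 : 2 * a / 2 = a := by omega
    have h3 : (2 * a + 1) / 2 = a := by omega
    rw [h2, h3, one_mul, inv_pow_simple, sj_pow, ← mul_assoc, ← pow_add, hn]
  · subst ha
    have hn : 2 * a + 1 + 1 = 2 * (a + 1) := by ring
    rw [hn, cs.prod_alternatingWord_eq_mul_pow, cs.prod_alternatingWord_eq_mul_pow]
    rw [if_neg (by simp [parity_simps]), if_pos (by exact ⟨a + 1, by ring⟩)]
    have h2 : 2 * a + 1 = a + a + 1 := by ring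
    have h3 : (2 * a + 1) / 2 = a := by omega
    have h4 : 2 * (a + 1) / 2 = a + 1 := by omega
    rw [h3, h4, one_mul, mul_inv_rev, inv_pow_simple, cs.inv_simple]
    rw [mul_assoc, sj_pow, ← mul_assoc, ← pow_add]
    have h5 : a + (a + 1) = 2 * a + 1 := by ring
    rw [h5]

end StrongExchangeAux

namespace StrongExchangeAux

variable {B W : Type*} [Group W] [DecidableEq W] {M : CoxeterMatrix B} (cs : CoxeterSystem M W)

local prefix:100 "ℓ" => cs.length
local prefix:100 "σ" => cs.simple
local prefix:100 "π" => cs.wordProd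

lemma risAlt (i j : B) (n : ℕ) :
    cs.rightInvSeq (alternatingWord i j n) =
      ((List.range n).map (fun k => (σ j * σ i) ^ k * σ j)).reverse := by
  induction n with
  | zero => simp [alternatingWord]
  | succ n ih =>
    rw [alternatingWord_succ']
    have hcons : ∀ (k : B) (ω : List B),
        cs.rightInvSeq (k :: ω) = ((π ω)⁻¹ * σ k * π ω) :: cs.rightInvSeq ω := fun _ _ => rfl
    rw [hcons, ih, List.range_succ, List.map_append, List.reverse_append]
    have he : (π (alternatingWord i j n))⁻¹ * σ (if Even n then j else i) *
        π (alternatingWord i j n) = (σ j * σ i) ^ n * σ j := by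
      have : σ (if Even n then j else i) * π (alternatingWord i j n)
          = π (alternatingWord i j (n + 1)) := by
        rw [alternatingWord_succ', cs.wordProd_cons]
      rw [mul_assoc, this, g_eq]
    rw [he]
    simp

lemma count_even_alt (i j : B) (t : W) :
    Even ((cs.rightInvSeq (alternatingWord i j (2 * M.M i j))).count t) := by
  rw [risAlt, List.count_reverse, two_mul, List.range_add, List.map_append, List.count_append]
  have hmap : (List.range (M.M i j)).map ((fun k => (σ j * σ i) ^ k * σ j) ∘ (M.M i j + ·))
      = (List.range (M.M i j)).map (fun k => (σ j * σ i) ^ k * σ j) := by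
    apply List.map_congr_left
    intro k _
    show (σ j * σ i) ^ (M.M i j + k) * σ j = (σ j * σ i) ^ k * σ j
    rw [pow_add, cs.simple_mul_simple_pow', one_mul]
  rw [List.map_map, hmap]
  exact ⟨_, rfl⟩

lemma isLiftable_phi : M.IsLiftable (phi cs) := by
  intro i j
  apply Equiv.ext
  rintro ⟨t, ε⟩
  rw [← prod_map_phi_alt, prod_map_phi]
  have hπ : π (alternatingWord i j (2 * M.M i j)) = 1 := by
    rw [cs.prod_alternatingWord_eq_mul_pow, if_pos ⟨M.M i j, by ring⟩]
    have : 2 * M.M i j / 2 = M.M i j := by omega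
    rw [this, one_mul, cs.simple_mul_simple_pow]
  rw [hπ, (count_even_alt cs i j t).neg_one_pow]
  simp

/-- the sign representation of `W` -/
def psi : W →* Equiv.Perm (W × ℤˣ) := cs.lift ⟨phi cs, isLiftable_phi cs⟩

lemma psi_wordProd (ω : List B) (t : W) (ε : ℤˣ) :
    psi cs (π ω) (t, ε) =
      (π ω * t * (π ω)⁻¹, ε * (-1) ^ ((cs.rightInvSeq ω).count t)) := by
  rw [← prod_map_phi]
  unfold CoxeterSystem.wordProd
  rw [MonoidHom.map_list_prod, List.map_map]
  congr 2
  apply List.map_congr_left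
  intro k _
  exact cs.lift_apply_simple (isLiftable_phi cs) k

lemma neg_one_pow_units_inj {a b : ℕ} (h : ((-1 : ℤˣ)) ^ a = (-1) ^ b) :
    (Even a ↔ Even b) := by
  rcases Nat.even_or_odd a with ha | ha <;> rcases Nat.even_or_odd b with hb | hb
  · exact iff_of_true ha hb
  · rw [ha.neg_one_pow, hb.neg_one_pow] at h; exact absurd h (by decide)
  · rw [ha.neg_one_pow, hb.neg_one_pow] at h; exact absurd h (by decide)
  · exact iff_of_false (by simpa [Nat.not_even_iff_odd] using ha)
      (by simpa [Nat.not_even_iff_odd] using hb)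

lemma parity_ris (ω₁ ω₂ : List B) (h : π ω₁ = π ω₂) (t : W) :
    (Even ((cs.rightInvSeq ω₁).count t) ↔ Even ((cs.rightInvSeq ω₂).count t)) := by
  have h1 := psi_wordProd cs ω₁ t 1
  have h2 := psi_wordProd cs ω₂ t 1
  rw [h] at h1
  rw [h1] at h2
  have := congrArg Prod.snd h2
  simp only [one_mul] at this
  exact neg_one_pow_units_inj this

lemma parity_lis (ω₁ ω₂ : List B) (h : π ω₁ = π ω₂) (t : W) :
    (Even ((cs.leftInvSeq ω₁).count t) ↔ Even ((cs.leftInvSeq ω₂).count t)) := by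
  have e1 : cs.leftInvSeq ω₁ = (cs.rightInvSeq ω₁.reverse).reverse := by
    rw [← cs.leftInvSeq_reverse, List.reverse_reverse]
  have e2 : cs.leftInvSeq ω₂ = (cs.rightInvSeq ω₂.reverse).reverse := by
    rw [← cs.leftInvSeq_reverse, List.reverse_reverse]
  rw [e1, e2, List.count_reverse, List.count_reverse]
  exact parity_ris cs _ _ (by rw [cs.wordProd_reverse, cs.wordProd_reverse, h]) t

end StrongExchangeAux

namespace StrongExchangeAux

variable {B W : Type*} [Group W] [DecidableEq W] {M : CoxeterMatrix B} (cs : CoxeterSystem M W)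

local prefix:100 "ℓ" => cs.length
local prefix:100 "σ" => cs.simple
local prefix:100 "π" => cs.wordProd

lemma leftInvSeq_append (ω₁ ω₂ : List B) :
    cs.leftInvSeq (ω₁ ++ ω₂) =
      cs.leftInvSeq ω₁ ++ (cs.leftInvSeq ω₂).map (fun x => π ω₁ * x * (π ω₁)⁻¹) := by
  induction ω₁ with
  | nil => simp
  | cons k ω₁ ih =>
    have hcons : ∀ (a : B) (ω : List B), cs.leftInvSeq (a :: ω)
        = σ a :: (cs.leftInvSeq ω).map (MulAut.conj (σ a)) := fun _ _ => rfl
    rw [List.cons_append, hcons, hcons, ih, List.map_append, List.map_map, List.cons_append]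
    congr 1
    congr 1
    apply List.map_congr_left
    intro x _
    show σ k * (π ω₁ * x * (π ω₁)⁻¹) * (σ k)⁻¹ = π (k :: ω₁) * x * (π (k :: ω₁))⁻¹
    rw [cs.wordProd_cons, mul_inv_rev, cs.inv_simple]
    group

lemma count_palindrome_odd (c : List B) (j : B) :
    Odd ((cs.leftInvSeq (c ++ j :: c.reverse)).count (π c * σ j * (π c)⁻¹)) := by
  induction c with
  | nil => simp
  | cons k c ih =>
    set t' := π c * σ j * (π c)⁻¹ with ht'
    have hw : (k :: c) ++ j :: (k :: c).reverse
        = k :: ((c ++ j :: c.reverse) ++ [k]) := by simp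
    have hρ : π (c ++ j :: c.reverse) = t' := by
      rw [cs.wordProd_append, cs.wordProd_cons, cs.wordProd_reverse, ht', mul_assoc]
    have ht : π (k :: c) * σ j * (π (k :: c))⁻¹ = σ k * t' * (σ k)⁻¹ := by
      rw [cs.wordProd_cons, mul_inv_rev, cs.inv_simple, ht']
      group
    rw [hw, ht]
    have hcons : ∀ (a : B) (ω : List B), cs.leftInvSeq (a :: ω)
        = σ a :: (cs.leftInvSeq ω).map (MulAut.conj (σ a)) := fun _ _ => rfl
    rw [hcons]
    have hconcat : cs.leftInvSeq ((c ++ j :: c.reverse) ++ [k])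
        = cs.leftInvSeq (c ++ j :: c.reverse) ++ [t' * σ k * t'⁻¹] := by
      rw [← List.concat_eq_append, cs.leftInvSeq_concat, hρ, List.concat_eq_append]
    rw [hconcat, List.count_cons, List.map_append, List.count_append]
    have hinj : Function.Injective (MulAut.conj (σ k) : W → W) := (MulAut.conj (σ k)).injective
    have hc1 : (List.map (⇑(MulAut.conj (σ k))) (cs.leftInvSeq (c ++ j :: c.reverse))).count
        (σ k * t' * (σ k)⁻¹) = (cs.leftInvSeq (c ++ j :: c.reverse)).count t' := by
      have : σ k * t' * (σ k)⁻¹ = MulAut.conj (σ k) t' := by simp [MulAut.conj_apply]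
      rw [this, List.count_map_of_injective _ _ hinj]
    have hkey : t' * σ k * t'⁻¹ = t' → t' = σ k := by
      intro hx
      have h3 : t' * σ k = t' * t' := by
        have := congrArg (· * t') hx
        simpa [mul_assoc] using this
      exact (mul_left_cancel h3).symm
    have hc2 : (List.map (⇑(MulAut.conj (σ k))) [t' * σ k * t'⁻¹]).count (σ k * t' * (σ k)⁻¹)
        = if t' = σ k then 1 else 0 := by
      simp only [List.map_cons, List.map_nil, List.count_singleton']
      by_cases h : t' = σ k
      · rw [if_pos h, if_pos (by rw [h]; simp [MulAut.conj_apply])]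
      · rw [if_neg h, if_neg]
        intro hc
        exact h (hkey (hinj (by simpa [MulAut.conj_apply] using hc)))
    have hhead : (if ((σ k : W) == σ k * t' * (σ k)⁻¹) = true then 1 else 0)
        = if t' = σ k then 1 else 0 := by
      simp only [beq_iff_eq]
      by_cases h : t' = σ k
      · rw [if_pos h, if_pos (by rw [h]; simp)]
      · rw [if_neg h, if_neg]
        intro hc
        apply h
        have h2 : σ k * t' = σ k * σ k := by
          have := congrArg (· * σ k) hc.symm
          simpa [mul_assoc, cs.inv_simple, cs.simple_mul_simple_self] using this
        exact mul_left_cancel h2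
    rw [hc1, hc2, hhead]
    obtain ⟨m, hm⟩ := ih
    rw [hm]
    refine ⟨m + (if t' = σ k then 1 else 0), ?_⟩
    generalize (if t' = σ k then (1:ℕ) else 0) = c
    omega


end StrongExchangeAux

namespace StrongExchangeAux

variable {B W : Type*} [Group W] [DecidableEq W] {M : CoxeterMatrix B} (cs : CoxeterSystem M W)

local prefix:100 "ℓ" => cs.length
local prefix:100 "σ" => cs.simple
local prefix:100 "π" => cs.wordProd

lemma mem_leftInvSeq_of_lt {t w : W} (ht : cs.IsReflection t)
    (hlt : ℓ (t * w) < ℓ w) {ω : List B} (hred : cs.IsReduced ω) (hπ : π ω = w) :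
    t ∈ cs.leftInvSeq ω := by
  have htsq : t * t = 1 := ht.mul_self
  obtain ⟨u, j, htu⟩ := ht
  obtain ⟨c, _, hc⟩ := cs.exists_reduced_word' u
  obtain ⟨sω, hsred, hsω⟩ := cs.exists_reduced_word' (t * w)
  -- the word ρ = (c ++ j :: c.reverse) ++ sω represents t * (t * w) = w
  set τ : List B := c ++ j :: c.reverse with hτ
  have hπτ : π τ = t := by
    rw [hτ, cs.wordProd_append, cs.wordProd_cons, cs.wordProd_reverse, ← hc, htu, mul_assoc]
  have hπρ : π (τ ++ sω) = w := by
    rw [cs.wordProd_append, hπτ, ← hsω, ← mul_assoc, htsq, one_mul]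
  -- count of t in lis ρ is odd
  have hτodd : Odd ((cs.leftInvSeq τ).count t) := by
    have := count_palindrome_odd cs c j
    rwa [← hc, ← htu] at this
  have hσzero : (cs.leftInvSeq sω).count t = 0 := by
    rw [List.count_eq_zero]
    intro hmem
    have := cs.isLeftInversion_of_mem_leftInvSeq hsred hmem
    rw [← hsω] at this
    have h2 := this.2
    rw [← mul_assoc, htsq, one_mul] at h2
    omega
  have hmapzero : ((cs.leftInvSeq sω).map (fun x => π τ * x * (π τ)⁻¹)).count t = 0 := by
    rw [hπτ, List.count_eq_zero]
    intro hmem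
    rw [List.mem_map] at hmem
    obtain ⟨x, hx, hxe⟩ := hmem
    have hxt : x = t := by
      have h4 : t * x = t * t := by
        have := congrArg (· * t) hxe
        simpa [mul_assoc] using this
      exact mul_left_cancel h4
    rw [List.count_eq_zero] at hσzero
    exact hσzero (hxt ▸ hx)
  have hρodd : Odd ((cs.leftInvSeq (τ ++ sω)).count t) := by
    rw [leftInvSeq_append, List.count_append, hmapzero, Nat.add_zero]
    exact hτodd
  have hωodd : Odd ((cs.leftInvSeq ω).count t) := by
    rw [Nat.odd_iff, ← Nat.not_even_iff]
    rw [Nat.odd_iff, ← Nat.not_even_iff] at hρodd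
    intro he
    exact hρodd ((parity_lis cs (τ ++ sω) ω (by rw [hπρ, hπ]) t).mpr he)
  have : (cs.leftInvSeq ω).count t ≠ 0 := by
    intro h0
    rw [h0] at hωodd
    simp at hωodd
  exact List.count_pos_iff.mp (Nat.pos_of_ne_zero this)

/-- Key lemma: if `ℓ(ws) < ℓ(w)`, `ℓ(tw) < ℓ(w)` and `ws ≠ tw`, then
`ℓ(tws) = ℓ(tw) - 1`. -/
lemma length_tws {t w : W} (ht : cs.IsReflection t) (i : B)
    (h1 : ℓ (w * σ i) + 1 = ℓ w) (h2 : ℓ (t * w) + 1 = ℓ w)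
    (hne : w * σ i ≠ t * w) : ℓ (t * w * σ i) + 1 = ℓ (t * w) := by
  obtain ⟨c, hcred, hc⟩ := cs.exists_reduced_word' (w * σ i)
  have hπω : π (c.concat i) = w := by
    rw [cs.wordProd_concat, ← hc, cs.simple_mul_simple_cancel_right]
  have hredω : cs.IsReduced (c.concat i) := by
    unfold CoxeterSystem.IsReduced at hcred ⊢
    rw [hπω, List.length_concat, ← hcred, ← hc]
    omega
  have hmem : t ∈ cs.leftInvSeq (c.concat i) :=
    mem_leftInvSeq_of_lt cs ht (by omega) hredω hπω
  rw [cs.leftInvSeq_concat, List.concat_eq_append, List.mem_append] at hmem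
  rcases hmem with hmem | hmem
  · -- t is a left inversion of w * σ i
    have hinv := cs.isLeftInversion_of_mem_leftInvSeq hcred hmem
    rw [← hc] at hinv
    have hlt : ℓ (t * (w * σ i)) < ℓ (w * σ i) := hinv.2
    rcases cs.length_mul_simple (t * w) i with hh | hh
    · rw [← mul_assoc] at hlt
      omega
    · rw [← mul_assoc] at hlt
      omega
  · -- t = (w σ i) σ i (w σ i)⁻¹, contradiction with hne
    exfalso
    rw [List.mem_singleton, ← hc] at hmem
    apply hne
    rw [cs.simple_mul_simple_cancel_right, mul_inv_rev, cs.inv_simple] at hmem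
    rw [hmem]
    group

end StrongExchangeAux


namespace StrongExchangeAux

variable {B W : Type*} [Group W] {M : CoxeterMatrix B}

lemma bruhatCovers_of_step (cs : CoxeterSystem M W) {u v : W} (t : W)
    (ht : cs.IsReflection t) (hv : v = t * u) (hlen : cs.length v = cs.length u + 1) :
    PaperFormal.bruhatCovers cs u v :=
  ⟨Relation.ReflTransGen.single ⟨t, ht, hv, by omega⟩, hlen⟩

end StrongExchangeAux

theorem stmt1 {B W : Type*} [Group W] {M : CoxeterMatrix B}
    (cs : CoxeterSystem M W) {V : Type*} [AddCommGroup V] [Module ℝ V]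
    (R : Realization cs V) (i : B) (α : V) (hα : α ∈ R.pos) (w : W)
    (h1 : bruhatCovers cs (w * cs.simple i) w)
    (h2 : bruhatCovers cs (R.reflOf α * w) w)
    (hne : w * cs.simple i ≠ R.reflOf α * w) :
    bruhatCovers cs (R.reflOf α * w * cs.simple i) (w * cs.simple i) ∧
      bruhatCovers cs (R.reflOf α * w * cs.simple i) (R.reflOf α * w) := by
  classical
  set t : W := R.reflOf α with htdef
  have ht : cs.IsReflection t := R.reflOf_isReflection α hα
  have hl1 : cs.length (w * cs.simple i) + 1 = cs.length w := by
    have := h1.2; omega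
  have hl2 : cs.length (t * w) + 1 = cs.length w := by
    have := h2.2; omega
  have hkey : cs.length (t * w * cs.simple i) + 1 = cs.length (t * w) :=
    StrongExchangeAux.length_tws cs ht i hl1 hl2 hne
  constructor
  · refine StrongExchangeAux.bruhatCovers_of_step cs t ht ?_ ?_
    · rw [← mul_assoc, ← mul_assoc, ht.mul_self, one_mul]
    · omega
  · refine StrongExchangeAux.bruhatCovers_of_step cs ((t * w) * cs.simple i * (t * w)⁻¹)
      ((cs.isReflection_simple i).conj (t * w)) ?_ ?_
    · simp [mul_assoc, mul_inv_rev, cs.simple_mul_simple_self]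
    · omega
end

section
/- Let W be a Weyl group, α_i a simple root, α a positive root, and w ∈ W with ws_i ≠ s_α w. If w is covered in Bruhat order by both ws_i and s_α w, then s_α w s_i covers both ws_i and s_α w in Bruhat order. -/
open CoxeterSystem Pointwise

namespace StrongExchangeAux

open scoped Classical

noncomputable section

variable {B W : Type*} [Group W] {M : CoxeterMatrix B} (cs : CoxeterSystem M W)

lemma sandwich {u : W} (hu : u * u = 1) (v : W) : u * (u * v * u) * u = v := by
  rw [show u * (u * v * u) * u = (u * u) * v * (u * u) by group, hu, one_mul, mul_one]

lemma conj_eq_iff {u : W} (hu : u * u = 1) (v w : W) : u * v * u = w ↔ v = u * w * u :=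
  ⟨fun h => by rw [← h, sandwich hu], fun h => by rw [h, sandwich hu]⟩

/-- The basic toggle map for the parity permutation representation. -/
def toggle (i : B) : W × ZMod 2 → W × ZMod 2 :=
  fun p => (cs.simple i * p.1 * cs.simple i, if p.1 = cs.simple i then p.2 + 1 else p.2)

theorem toggle_involutive (i : B) : Function.Involutive (toggle cs i) := by
  intro ⟨t, e⟩
  have ha : cs.simple i * cs.simple i = 1 := cs.simple_mul_simple_self i
  simp only [toggle]
  have h1 : cs.simple i * (cs.simple i * t * cs.simple i) * cs.simple i = t := sandwich ha t
  have h2 : (cs.simple i * t * cs.simple i = cs.simple i) ↔ (t = cs.simple i) := by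
    rw [conj_eq_iff ha]
    rw [show cs.simple i * cs.simple i * cs.simple i = (cs.simple i * cs.simple i) * cs.simple i
      by group, ha, one_mul]
  by_cases h : t = cs.simple i
  · rw [if_pos h, if_pos (h2.mpr h), h1, add_assoc, CharTwo.add_self_eq_zero, add_zero]
  · simp [h1, h2, h]

/-- The parity permutation representation on simple reflections. -/
def permRep (i : B) : Equiv.Perm (W × ZMod 2) := (toggle_involutive cs i).toPerm

theorem permRep_apply (i : B) (t : W) (e : ZMod 2) :
    permRep cs i (t, e) = (cs.simple i * t * cs.simple i,
      if t = cs.simple i then e + 1 else e) := rfl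


theorem permRep_pow (i i' : B) (k : ℕ) (t : W) (e : ZMod 2) :
    ((permRep cs i * permRep cs i') ^ k) (t, e) =
      ((cs.simple i * cs.simple i') ^ k * t * ((cs.simple i * cs.simple i') ^ k)⁻¹,
        e + ∑ x ∈ Finset.range (2 * k),
          (if (cs.simple i * cs.simple i') ^ x * t = cs.simple i' then (1 : ZMod 2) else 0)) := by
  induction k generalizing t e with
  | zero => simp
  | succ k ih =>
    set a := cs.simple i with hadef
    set b := cs.simple i' with hbdef
    set z := a * b with hz
    have ha : a * a = 1 := cs.simple_mul_simple_self i
    have hb : b * b = 1 := cs.simple_mul_simple_self i'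
    have hainv : a⁻¹ = a := cs.inv_simple i
    have hbinv : b⁻¹ = b := cs.inv_simple i'
    have hzbz : z * b * z = b := by
      rw [hz, show a * b * b * (a * b) = a * (b * b) * (a * b) by group, hb, mul_one,
        show a * (a * b) = (a * a) * b by group, ha, one_mul]
    have step : (permRep cs i * permRep cs i') (t, e) =
        (z * t * z⁻¹, e + ((if z ^ 0 * t = b then (1 : ZMod 2) else 0)
          + (if z ^ 1 * t = b then (1 : ZMod 2) else 0))) := by
      show permRep cs i (permRep cs i' (t, e)) = _
      rw [permRep_apply, permRep_apply, ← hadef, ← hbdef]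
      have hfst : a * (b * t * b) * a = z * t * z⁻¹ := by
        rw [hz, mul_inv_rev, hainv, hbinv]
        group
      have hc1 : (z ^ 0 * t = b) ↔ (t = b) := by rw [pow_zero, one_mul]
      have hzb : z * (b * a * b) = b := by
        have h1 : z * (b * a * b) = a * (b * b) * a * b := by rw [hz]; group
        rw [h1, hb, mul_one, ha, one_mul]
      have hc2 : (z ^ 1 * t = b) ↔ (b * t * b = a) := by
        rw [pow_one, conj_eq_iff hb]
        constructor
        · intro h
          have ht : t = z⁻¹ * b := by rw [← h]; group
          rw [ht, hz, mul_inv_rev, hainv, hbinv]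
        · rintro rfl
          exact hzb
      rw [Prod.mk.injEq]
      refine ⟨hfst, ?_⟩
      simp only [hc1, hc2]
      split_ifs <;> ring
    rw [pow_succ, Equiv.Perm.mul_apply, step, ih]
    have hshift : ∀ x : ℕ, ((z ^ x * (z * t * z⁻¹) = b) ↔ (z ^ (x + 1 + 1) * t = b)) := by
      intro x
      have h1 : z ^ (x + 1 + 1) * t = z * (z ^ x * (z * t * z⁻¹)) * z := by group
      constructor
      · intro h
        rw [h1, h, hzbz]
      · intro h
        rw [h1, ← hzbz] at h
        exact mul_left_cancel (mul_right_cancel h)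
    rw [Prod.mk.injEq]
    constructor
    · group
    · simp only [hshift]
      rw [show 2 * (k + 1) = 2 * k + 1 + 1 by ring, Finset.sum_range_succ',
        Finset.sum_range_succ']
      simp only [Nat.zero_add]
      ring


theorem permRep_liftable : M.IsLiftable (fun i => permRep cs i) := by
  intro i i'
  apply Equiv.ext
  rintro ⟨t, e⟩
  show ((permRep cs i * permRep cs i') ^ M i i') (t, e) = (t, e)
  rw [permRep_pow, cs.simple_mul_simple_pow]
  rw [show 2 * M i i' = M i i' + M i i' by ring, Finset.sum_range_add]
  have hsame : ∀ x ∈ Finset.range (M i i'),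
      (if (cs.simple i * cs.simple i') ^ (M i i' + x) * t = cs.simple i' then (1 : ZMod 2) else 0)
      = (if (cs.simple i * cs.simple i') ^ x * t = cs.simple i' then (1 : ZMod 2) else 0) := by
    intro x _
    rw [pow_add, cs.simple_mul_simple_pow, one_mul]
  rw [Finset.sum_congr rfl hsame, CharTwo.add_self_eq_zero, add_zero]
  simp

/-- The parity permutation representation of the Coxeter group. -/
def F : W →* Equiv.Perm (W × ZMod 2) := cs.lift ⟨fun i => permRep cs i, permRep_liftable cs⟩

theorem F_simple (i : B) : F cs (cs.simple i) = permRep cs i :=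
  cs.lift_apply_simple (permRep_liftable cs) i

/-- The parity cocycle. -/
def nn (w t : W) : ZMod 2 := (F cs w (t, 0)).2

theorem F_apply (w : W) (t : W) (e : ZMod 2) :
    F cs w (t, e) = (w * t * w⁻¹, e + nn cs w t) := by
  induction w using cs.simple_induction_left generalizing t e with
  | one => simp [nn]
  | mul_simple_left w i ih =>
    have h0 : F cs (cs.simple i * w) (t, 0) = permRep cs i (F cs w (t, 0)) := by
      rw [map_mul, Equiv.Perm.mul_apply, F_simple]
    have h1 : F cs (cs.simple i * w) (t, e) = permRep cs i (F cs w (t, e)) := by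
      rw [map_mul, Equiv.Perm.mul_apply, F_simple]
    have h2 : nn cs (cs.simple i * w) t = (permRep cs i (F cs w (t, 0))).2 := by
      rw [show nn cs (cs.simple i * w) t = (F cs (cs.simple i * w) (t, 0)).2 from rfl, h0]
    rw [h1, h2, ih, ih, permRep_apply, permRep_apply]
    rw [Prod.mk.injEq]
    constructor
    · rw [mul_inv_rev, cs.inv_simple]
      group
    · split_ifs <;> ring

theorem nn_mul (x y t : W) : nn cs (x * y) t = nn cs y t + nn cs x (y * t * y⁻¹) := by
  have h : F cs (x * y) (t, 0) = F cs x (F cs y (t, 0)) := by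
    rw [map_mul, Equiv.Perm.mul_apply]
  rw [show nn cs (x * y) t = (F cs (x * y) (t, 0)).2 from rfl, h, F_apply cs y]
  rw [F_apply cs x]
  simp

theorem nn_simple (i : B) (t : W) :
    nn cs (cs.simple i) t = if t = cs.simple i then 1 else 0 := by
  rw [show nn cs (cs.simple i) t = (F cs (cs.simple i) (t, 0)).2 from rfl, F_simple,
    permRep_apply]
  split_ifs <;> simp

theorem nn_one (t : W) : nn cs 1 t = 0 := by
  rw [show nn cs 1 t = (F cs 1 (t, 0)).2 from rfl]
  simp


theorem length_lt_of_nn_eq_one :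
    ∀ n : ℕ, ∀ w t : W, cs.length w = n → cs.IsReflection t → nn cs w t = 1 →
      cs.length (w * t) < cs.length w := by
  intro n
  induction n using Nat.strong_induction_on with
  | _ n ihn =>
    intro w t hlen ht hnn
    have hw : w ≠ 1 := by
      rintro rfl
      rw [nn_one] at hnn
      exact one_ne_zero hnn.symm
    obtain ⟨i, hi⟩ := cs.exists_leftDescent_of_ne_one hw
    set w' := cs.simple i * w with hw'
    have hlt : cs.length w' < cs.length w := hi
    have hw_eq : w = cs.simple i * w' := by
      rw [hw', ← mul_assoc, cs.simple_mul_simple_self, one_mul]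
    have hcoc : nn cs w t = nn cs w' t + nn cs (cs.simple i) (w' * t * w'⁻¹) := by
      rw [hw_eq]
      exact nn_mul cs (cs.simple i) w' t
    by_cases hcase : w' * t * w'⁻¹ = cs.simple i
    · have hwt : w * t = w' := by
        have h1 : w' * t = cs.simple i * w' := by
          rw [← hcase]
          group
        rw [hw_eq, mul_assoc, h1, ← mul_assoc, cs.simple_mul_simple_self, one_mul]
      rw [hwt]
      exact hlt
    · have hnn' : nn cs w' t = 1 := by
        rw [hcoc, nn_simple, if_neg hcase, add_zero] at hnn
        exact hnn
      have ih := ihn (cs.length w') (by omega : cs.length w' < n) w' t rfl ht hnn'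
      have h2 : cs.length (w * t) ≤ cs.length (w' * t) + 1 := by
        rw [hw_eq, mul_assoc]
        rcases cs.length_simple_mul (w' * t) i with h | h <;> omega
      omega

theorem nn_refl_self {t : W} (ht : cs.IsReflection t) : nn cs t t = 1 := by
  obtain ⟨v, j, rfl⟩ := ht
  set t := v * cs.simple j * v⁻¹ with hts
  have hconj : v⁻¹ * t * v = cs.simple j := by
    rw [hts]
    group
  have h3 : nn cs v⁻¹ t + nn cs v (v⁻¹ * t * v⁻¹⁻¹) = 0 := by
    rw [← nn_mul, mul_inv_cancel, nn_one]
  rw [inv_inv, hconj] at h3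
  have h1 : nn cs t t = nn cs (cs.simple j * v⁻¹) t
      + nn cs v ((cs.simple j * v⁻¹) * t * (cs.simple j * v⁻¹)⁻¹) := by
    have h1' := nn_mul cs v (cs.simple j * v⁻¹) t
    have harg : v * (cs.simple j * v⁻¹) = t := by rw [hts]; group
    rw [harg] at h1'
    exact h1'
  have h4 : (cs.simple j * v⁻¹) * t * (cs.simple j * v⁻¹)⁻¹ = cs.simple j := by
    rw [mul_inv_rev, inv_inv, cs.inv_simple, hts]
    have hs : cs.simple j * cs.simple j = 1 := cs.simple_mul_simple_self j
    rw [show cs.simple j * v⁻¹ * (v * cs.simple j * v⁻¹) * (v * cs.simple j)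
        = cs.simple j * (v⁻¹ * v) * cs.simple j * (v⁻¹ * v) * cs.simple j by group]
    rw [inv_mul_cancel, mul_one, mul_one, show cs.simple j * cs.simple j * cs.simple j
        = (cs.simple j * cs.simple j) * cs.simple j from rfl, hs, one_mul]
  have h2 : nn cs (cs.simple j * v⁻¹) t = nn cs v⁻¹ t + 1 := by
    rw [nn_mul, inv_inv, hconj, nn_simple, if_pos rfl]
  rw [h1, h4, h2] at *
  -- goal: nn v⁻¹ t + 1 + nn v (s j) = 1, with h3 : nn v⁻¹ t + nn v (s j) = 0
  have := h3
  linear_combination (norm := ring_nf) h3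

theorem nn_eq_one_iff {w t : W} (ht : cs.IsReflection t) :
    nn cs w t = 1 ↔ cs.length (w * t) < cs.length w := by
  constructor
  · intro h
    exact length_lt_of_nn_eq_one cs (cs.length w) w t rfl ht h
  · intro h
    by_contra hne
    have h0 : nn cs w t = 0 := by
      have : ∀ x : ZMod 2, x = 0 ∨ x = 1 := by decide
      rcases this (nn cs w t) with h' | h'
      · exact h'
      · exact absurd h' hne
    have hwt : nn cs (w * t) t = 1 := by
      rw [nn_mul, show t * t * t⁻¹ = t by rw [ht.mul_self, one_mul, ht.inv], nn_refl_self cs ht, h0,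
        add_zero]
    have := length_lt_of_nn_eq_one cs (cs.length (w * t)) (w * t) t rfl ht hwt
    rw [mul_assoc, ht.mul_self, mul_one] at this
    omega

end

end StrongExchangeAux
open PaperFormal

theorem stmt2 {B W : Type*} [Group W] {M : CoxeterMatrix B}
    (cs : CoxeterSystem M W) {V : Type*} [AddCommGroup V] [Module ℝ V]
    (R : Realization cs V) (i : B) (α : V) (hα : α ∈ R.pos) (w : W)
    (h1 : bruhatCovers cs w (w * cs.simple i))
    (h2 : bruhatCovers cs w (R.reflOf α * w))
    (hne : w * cs.simple i ≠ R.reflOf α * w) :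
    bruhatCovers cs (w * cs.simple i) (R.reflOf α * w * cs.simple i) ∧
      bruhatCovers cs (R.reflOf α * w) (R.reflOf α * w * cs.simple i)     := by
  classical
  obtain ⟨hle1, hlen1⟩ := h1
  obtain ⟨hle2, hlen2⟩ := h2
  set t := R.reflOf α with htdef
  have ht : cs.IsReflection t := R.reflOf_isReflection α hα
  open StrongExchangeAux in
  have hkey : cs.length (t * w * cs.simple i) = cs.length w + 2 := by
    rcases cs.length_mul_simple (t * w) i with h | h
    · omega
    · exfalso
      have hu : cs.length (t * w * cs.simple i) = cs.length w := by omega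
      have hvinv : (w * cs.simple i)⁻¹ = cs.simple i * w⁻¹ := by
        rw [mul_inv_rev, cs.inv_simple]
      have hnnv : StrongExchangeAux.nn cs (w * cs.simple i)⁻¹ t = 1 := by
        rw [StrongExchangeAux.nn_eq_one_iff cs ht]
        have e1 : cs.length ((w * cs.simple i)⁻¹ * t) = cs.length (t * w * cs.simple i) := by
          rw [← cs.length_inv]
          congr 1
          rw [mul_inv_rev, inv_inv, ht.inv, ← mul_assoc]
        have e2 : cs.length (w * cs.simple i)⁻¹ = cs.length w + 1 := by
          rw [cs.length_inv]; omega
        omega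
      have hnnw : StrongExchangeAux.nn cs w⁻¹ t = 0 := by
        have hne1 : StrongExchangeAux.nn cs w⁻¹ t ≠ 1 := by
          intro h1
          rw [StrongExchangeAux.nn_eq_one_iff cs ht] at h1
          have e1 : cs.length (w⁻¹ * t) = cs.length (t * w) := by
            rw [← cs.length_inv]
            congr 1
            rw [mul_inv_rev, inv_inv, ht.inv]
          rw [e1, cs.length_inv] at h1
          omega
        rcases (by decide : ∀ x : ZMod 2, x = 0 ∨ x = 1) (StrongExchangeAux.nn cs w⁻¹ t)
          with h' | h'
        · exact h'
        · exact absurd h' hne1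
      have hcoc : StrongExchangeAux.nn cs (w * cs.simple i)⁻¹ t
          = StrongExchangeAux.nn cs w⁻¹ t
            + StrongExchangeAux.nn cs (cs.simple i) (w⁻¹ * t * w) := by
        rw [hvinv]
        have := StrongExchangeAux.nn_mul cs (cs.simple i) w⁻¹ t
        rwa [inv_inv] at this
      rw [hcoc, hnnw, zero_add, StrongExchangeAux.nn_simple] at hnnv
      have hcond : w⁻¹ * t * w = cs.simple i := by
        by_contra hc
        rw [if_neg hc] at hnnv
        exact (by decide : (0 : ZMod 2) ≠ 1) hnnv
      apply hne
      rw [← hcond]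
      group
  refine ⟨⟨?_, ?_⟩, ⟨?_, ?_⟩⟩
  · apply Relation.ReflTransGen.single
    refine ⟨t, ht, by rw [mul_assoc], ?_⟩
    omega
  · omega
  · apply Relation.ReflTransGen.single
    refine ⟨t * w * cs.simple i * (t * w)⁻¹, ⟨t * w, i, rfl⟩, ?_, ?_⟩
    · group
    · omega
  · omega
end

section
/- Let u ≤ v in a Weyl group W and let α_i be a right descent of v (so vs_i < v). If us_i < u, then AD(u,v) = AD(us_i, vs_i). -/
open CoxeterSystem Pointwise

open PaperFormal

namespace StmtAux

open PaperFormal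
open scoped Classical

variable {B W : Type*} [Group W] {M : CoxeterMatrix B} (cs : CoxeterSystem M W)

local prefix:100 "ℓ" => cs.length
local prefix:100 "s" => cs.simple
local prefix:100 "π" => cs.wordProd

/-- conjugation action of `W` on sign functions -/
def cact (w : W) : (W → ℤˣ) ≃* (W → ℤˣ) where
  toFun f := fun t => f (w⁻¹ * t * w)
  invFun f := fun t => f (w * t * w⁻¹)
  left_inv f := by funext t; group
  right_inv f := by funext t; group
  map_mul' f g := rfl

def cphi : W →* MulAut (W → ℤˣ) where
  toFun := cact
  map_one' := by ext f t; simp [cact]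
  map_mul' a b := by ext f t; simp [cact, mul_assoc]

abbrev GG (W : Type*) [Group W] : Type _ :=
  (W → ℤˣ) ⋊[(cphi : W →* MulAut (W → ℤˣ))] W

noncomputable def ff (i : B) : GG W :=
  ⟨fun t => if t = cs.simple i then -1 else 1, cs.simple i⟩

noncomputable def etaF (ω : List B) : W → ℤˣ :=
  fun t => (-1) ^ (List.count t (cs.leftInvSeq ω))

lemma leftInvSeq_cons (i : B) (ω : List B) :
    cs.leftInvSeq (i :: ω) = s i :: List.map (⇑(MulAut.conj (s i))) (cs.leftInvSeq ω) := rfl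

lemma prod_map_ff (ω : List B) :
    (ω.map (ff cs)).prod = ⟨etaF cs ω, π ω⟩ := by
  induction ω with
  | nil =>
      simp only [List.map_nil, List.prod_nil, wordProd_nil]
      ext t
      · simp [etaF]
      · rfl
  | cons i ω ih =>
      simp only [List.map_cons, List.prod_cons, ih, wordProd_cons]
      have hl : (ff cs i * (⟨etaF cs ω, π ω⟩ : GG W)).left = etaF cs (i :: ω) := by
        rw [SemidirectProduct.mul_left]
        funext t
        have h1 : (MulAut.conj (s i)) (s i * t * s i) = t := by
          rw [MulAut.conj_apply, cs.inv_simple,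
            show s i * (s i * t * s i) * s i = (s i * s i) * t * (s i * s i) by group,
            cs.simple_mul_simple_self]
          group
        have hcount : List.count t (List.map (⇑(MulAut.conj (s i))) (cs.leftInvSeq ω))
            = List.count (s i * t * s i) (cs.leftInvSeq ω) := by
          conv_lhs => rw [← h1]
          exact List.count_map_of_injective _ _ (MulEquiv.injective _) _
        show (ff cs i).left t * (etaF cs ω) ((s i)⁻¹ * t * (s i)) = etaF cs (i :: ω) t
        rw [cs.inv_simple]
        show (if t = s i then (-1 : ℤˣ) else 1) * (etaF cs ω) (s i * t * s i)
            = etaF cs (i :: ω) t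
        unfold etaF
        rw [leftInvSeq_cons, List.count_cons, hcount, pow_add, mul_comm]
        congr 1
        by_cases h : t = s i
        · simp [h]
        · have : ¬ (s i = t) := fun hh => h hh.symm
          simp [h, this]
      have hr : (ff cs i * (⟨etaF cs ω, π ω⟩ : GG W)).right = s i * π ω := rfl
      calc ff cs i * (⟨etaF cs ω, π ω⟩ : GG W)
          = ⟨(ff cs i * (⟨etaF cs ω, π ω⟩ : GG W)).left,
             (ff cs i * (⟨etaF cs ω, π ω⟩ : GG W)).right⟩ := rfl
        _ = ⟨etaF cs (i :: ω), s i * π ω⟩ := by rw [hl, hr]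

lemma alt_cons_cons (i j : B) (n : ℕ) :
    alternatingWord i j (2 * (n + 1)) = i :: j :: alternatingWord i j (2 * n) := by
  have h1 : 2 * (n+1) = (2*n+1) + 1 := by ring
  rw [h1, alternatingWord_succ' i j (2*n+1), alternatingWord_succ' i j (2*n)]
  simp [Nat.even_add_one, parity_simps]

lemma altLis (i j : B) (n : ℕ) :
    cs.leftInvSeq (alternatingWord i j (2 * n))
      = (List.range (2 * n)).map (fun k => (s i * s j) ^ k * s i) := by
  induction n with
  | zero => simp [alternatingWord]
  | succ n ih =>
      rw [alt_cons_cons, leftInvSeq_cons, leftInvSeq_cons, ih]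
      have h2 : 2 * (n+1) = (2*n) + 1 + 1 := by ring
      rw [h2, List.range_succ_eq_map, List.range_succ_eq_map]
      simp only [List.map_cons, List.map_map]
      congr 1
      · simp
      congr 1
      · simp [MulAut.conj_apply, cs.inv_simple]
      · apply List.map_congr_left
        intro k _
        simp only [Function.comp_apply, MulAut.conj_apply, cs.inv_simple]
        have h0 : s i * (s j * ((s i * s j) ^ k * s i) * s j) * s i
            = (s i * s j) * ((s i * s j) ^ k) * (s i * s j) * s i := by
          group
        have h1 : (s i * s j) * ((s i * s j) ^ k) * (s i * s j) * s i
            = (s i * s j) ^ (k+1+1) * s i := by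
          rw [pow_succ ((s i) * (s j)) (k+1), pow_succ' ((s i) * (s j)) k]
        simpa [mul_assoc] using h0.trans h1

lemma liftable : M.IsLiftable (ff cs) := by
  intro i j
  have hprod : ((alternatingWord i j (2 * M i j)).map (ff cs)).prod
      = (ff cs i * ff cs j) ^ (M i j) := by
    induction (M i j) with
    | zero => simp [alternatingWord]
    | succ n ih =>
        rw [alt_cons_cons]
        simp only [List.map_cons, List.prod_cons, ih, pow_succ']
        rw [mul_assoc]
  rw [← hprod, prod_map_ff]
  have hπ : π (alternatingWord i j (2 * M i j)) = 1 := by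
    rw [prod_alternatingWord_eq_mul_pow]
    simp [Nat.mul_div_cancel_left, cs.simple_mul_simple_pow i j]
  have hη : etaF cs (alternatingWord i j (2 * M i j)) = 1 := by
    funext t
    unfold etaF
    rw [altLis]
    have hsplit : List.range (2 * M i j) = List.range (M i j) ++ (List.range (M i j)).map (· + M i j) := by
      have : 2 * M i j = M i j + M i j := by ring
      rw [this, List.range_add]
      congr 1
      apply List.map_congr_left
      intro k _; omega
    rw [hsplit, List.map_append, List.map_map]
    have : List.map ((fun k => (s i * s j) ^ k * s i) ∘ (· + M i j)) (List.range (M i j))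
        = List.map (fun k => (s i * s j) ^ k * s i) (List.range (M i j)) := by
      apply List.map_congr_left
      intro k _
      simp only [Function.comp_apply]
      rw [pow_add, cs.simple_mul_simple_pow i j, mul_one]
    rw [this, List.count_append, ← two_mul, pow_mul]
    simp
  rw [hπ, hη]
  rfl

noncomputable def FF : W →* GG W := cs.lift ⟨ff cs, liftable cs⟩

lemma FF_simple (i : B) : FF cs (s i) = ff cs i := cs.lift_apply_simple (liftable cs) i

lemma FF_wordProd (ω : List B) : FF cs (π ω) = ⟨etaF cs ω, π ω⟩ := by
  rw [← prod_map_ff]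
  rw [wordProd, ← List.prod_hom _ (FF cs), List.map_map]
  congr 1
  apply List.map_congr_left
  intro i _
  exact FF_simple cs i

lemma FF_right (w : W) : (FF cs w).right = w := by
  obtain ⟨ω, -, rfl⟩ := cs.exists_reduced_word w
  rw [FF_wordProd]

lemma cphi_apply (w : W) (f : W → ℤˣ) (t : W) : (cphi w) f t = f (w⁻¹ * t * w) := rfl

lemma conj_left_eval (a : W → ℤˣ) (w x : W) (n : W → ℤˣ) :
    (((⟨a, w⟩ : GG W) * ⟨n, x⟩ * (⟨a, w⟩ : GG W)⁻¹)).left (w * x * w⁻¹)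
      = a (w * x * w⁻¹) * n x * (a (w * x * w⁻¹))⁻¹ := by
  rw [SemidirectProduct.mul_left, SemidirectProduct.inv_left, SemidirectProduct.mul_left,
    SemidirectProduct.mul_right]
  simp only [Pi.mul_apply, cphi_apply, Pi.inv_apply]
  congr 2
  · group
  · group

lemma FF_left_refl_self {t : W} (ht : cs.IsReflection t) : (FF cs t).left t = -1 := by
  obtain ⟨w, i, rfl⟩ := ht
  have hfw : FF cs w = ⟨(FF cs w).left, w⟩ := by
    conv_lhs => rw [show FF cs w = ⟨(FF cs w).left, (FF cs w).right⟩ from rfl, FF_right cs w]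
  rw [map_mul, map_mul, map_inv, hfw, FF_simple]
  show ((⟨(FF cs w).left, w⟩ : GG W) * ⟨(ff cs i).left, s i⟩ * (⟨(FF cs w).left, w⟩ : GG W)⁻¹).left
      (w * s i * w⁻¹) = -1
  rw [conj_left_eval]
  have : (ff cs i).left (s i) = -1 := if_pos rfl
  rw [this]
  generalize (FF cs w).left (w * cs.simple i * w⁻¹) = c
  rw [mul_comm c (-1), mul_assoc, mul_inv_cancel, mul_one]

lemma etaF_eq {ω : List B} {w : W} (h : π ω = w) : etaF cs ω = (FF cs w).left := by
  rw [← h, FF_wordProd]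

/-- The strong exchange property. -/
theorem strongExchange {t w : W} (ht : cs.IsReflection t) (hlt : ℓ (t * w) < ℓ w)
    {ω : List B} (hlen : ω.length = ℓ w) (hprod : π ω = w) :
    ∃ j < ω.length, t * w = π (ω.eraseIdx j) := by
  have hmem : t ∈ cs.leftInvSeq ω := by
    by_contra hnot
    have h0 : (FF cs w).left t = 1 := by
      rw [← etaF_eq cs hprod]
      unfold etaF
      rw [List.count_eq_zero_of_not_mem hnot, pow_zero]
    have h1 : (FF cs (t * w)).left t = -1 := by
      rw [map_mul, SemidirectProduct.mul_left, FF_right]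
      show (FF cs t).left t * ((cphi t) (FF cs w).left) t = -1
      rw [cphi_apply, show t⁻¹ * t * t = t by group, h0, mul_one, FF_left_refl_self cs ht]
    obtain ⟨ω', hlen', hprod'⟩ := cs.exists_reduced_word (t * w)
    have h2 : etaF cs ω' t = -1 := by rw [etaF_eq cs hprod'.symm, h1]
    have hmem' : t ∈ cs.leftInvSeq ω' := by
      by_contra hn
      unfold etaF at h2
      rw [List.count_eq_zero_of_not_mem hn, pow_zero] at h2
      exact absurd h2 (by decide)
    have hred' : cs.IsReduced ω' := by
      exact hlen'
    have hinv := (cs.isLeftInversion_of_mem_leftInvSeq hred' hmem').2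
    rw [← hprod', ← mul_assoc, ht.mul_self, one_mul] at hinv
    omega
  obtain ⟨j, hj, hget⟩ := List.getElem_of_mem hmem
  rw [cs.length_leftInvSeq] at hj
  refine ⟨j, hj, ?_⟩
  have := cs.getD_leftInvSeq_mul_wordProd ω j
  rw [List.getD_eq_getElem _ _ (by rwa [cs.length_leftInvSeq]), hget, hprod] at this
  exact this


lemma mss (w : W) (i : B) : (w * s i) * s i = w := by
  rw [mul_assoc, cs.simple_mul_simple_self, mul_one]

lemma ble_of_step {t x : W} (ht : cs.IsReflection t) (h : ℓ x < ℓ (t * x)) :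
    bruhatLE cs x (t * x) :=
  Relation.ReflTransGen.single ⟨t, ht, rfl, h⟩

lemma ble_trans {x y z : W} (h1 : bruhatLE cs x y) (h2 : bruhatLE cs y z) :
    bruhatLE cs x z := Relation.ReflTransGen.trans h1 h2

lemma ble_length_le {u v : W} (h : bruhatLE cs u v) : ℓ u ≤ ℓ v := by
  induction h with
  | refl => exact le_rfl
  | tail _ step ih => obtain ⟨t, ht, rfl, hl⟩ := step; omega

lemma ble_eq_of_length_ge {u v : W} (h : bruhatLE cs u v) (hl : ℓ v ≤ ℓ u) : u = v := by
  rcases Relation.ReflTransGen.cases_tail h with rfl | ⟨c, hc, t, ht, rfl, hlen⟩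
  · rfl
  · have := ble_length_le cs hc; omega

lemma ble_mul_simple_of_lt {x : W} {i : B} (h : ℓ x < ℓ (x * s i)) :
    bruhatLE cs x (x * s i) := by
  have ht : cs.IsReflection (x * s i * x⁻¹) := (cs.isReflection_simple i).conj x
  have he : (x * s i * x⁻¹) * x = x * s i := by group
  have h2 : ℓ x < ℓ ((x * s i * x⁻¹) * x) := by rwa [he]
  have := ble_of_step cs ht h2
  rwa [he] at this

lemma ble_simple_mul_of_gt {x : W} {i : B} (h : ℓ (x * s i) < ℓ x) :
    bruhatLE cs (x * s i) x := by
  have ht : cs.IsReflection (x * s i * x⁻¹) := (cs.isReflection_simple i).conj x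
  have he : (x * s i * x⁻¹) * (x * s i) = x := by
    rw [show x * s i * x⁻¹ * (x * s i) = x * (s i * s i) by group,
      cs.simple_mul_simple_self, mul_one]
  have h2 : ℓ (x * s i) < ℓ ((x * s i * x⁻¹) * (x * s i)) := by rwa [he]
  have := ble_of_step cs ht h2
  rwa [he] at this

lemma trick {w : W} {i : B} {t : W} (ht : cs.IsReflection t)
    (hws : ℓ (w * s i) < ℓ w) (h1 : ℓ (t * w) + 1 = ℓ w)
    (h2 : ℓ (t * w) < ℓ (t * w * s i)) : t * w = w * s i := by
  obtain ⟨κ, hκlen, hκprod⟩ := cs.exists_reduced_word (w * s i)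
  have hωprod : π (κ.concat i) = w := by
    rw [wordProd_concat, ← hκprod, mss]
  have hlws : ℓ (w * s i) + 1 = ℓ w := by
    rcases cs.length_mul_simple w i with hh | hh
    · omega
    · exact hh
  have hωlen : (κ.concat i).length = ℓ w := by
    rw [List.length_concat, ← (show ℓ (π κ) = κ.length from hκlen), ← hκprod, hlws]
  obtain ⟨j, hj, hj2⟩ := strongExchange cs ht (by omega) hωlen hωprod
  rw [List.length_concat] at hj
  by_cases hlast : j = κ.length
  · rw [hlast] at hj2
    rw [show κ.concat i = κ ++ [i] from List.concat_eq_append,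
      List.eraseIdx_append_of_length_le (le_refl κ.length)] at hj2
    simp only [Nat.sub_self, List.eraseIdx_zero, List.tail_cons, List.append_nil] at hj2
    rw [hj2, hκprod]
  · have hjlt : j < κ.length := by omega
    rw [show κ.concat i = κ ++ [i] from List.concat_eq_append,
      List.eraseIdx_append_of_lt_length hjlt] at hj2
    have : t * w * s i = π (κ.eraseIdx j) := by
      rw [hj2, wordProd_append, wordProd_singleton, mss]
    have hle := cs.length_wordProd_le (κ.eraseIdx j)
    rw [← this] at hle
    have : (κ.eraseIdx j).length + 1 = κ.length := List.length_eraseIdx_add_one hjlt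
    have hκl : κ.length = ℓ (w * s i) := by rw [hκprod]; exact hκlen.symm
    have hcl : (κ.concat i).length = κ.length + 1 := List.length_concat
    omega

/-- The lifting properties Z1, Z2, Z3 (right-handed). -/
lemma Zlemma (i : B) : ∀ n (y x : W), ℓ y = n → bruhatLE cs x y →
    ((ℓ y < ℓ (y * s i) → ℓ x < ℓ (x * s i) → bruhatLE cs (x * s i) (y * s i))
    ∧ (ℓ (y * s i) < ℓ y → ℓ x < ℓ (x * s i) → bruhatLE cs x (y * s i))
    ∧ (ℓ (y * s i) < ℓ y → ℓ (x * s i) < ℓ x → bruhatLE cs (x * s i) (y * s i))) := by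
  intro n
  induction n using Nat.strong_induction_on with
  | _ n IH =>
    intro y x hn hxy
    rcases Relation.ReflTransGen.cases_tail hxy with rfl | ⟨z, hxz, t, ht, rfl, hlz⟩
    · refine ⟨fun _ _ => Relation.ReflTransGen.refl, fun h1 h2 => by omega,
        fun _ _ => Relation.ReflTransGen.refl⟩
    · subst hn
      have hassoc : (t * z) * s i = t * (z * s i) := by rw [mul_assoc]
      refine ⟨?_, ?_, ?_⟩
      -- Z1
      · intro hyy hxx
        rcases cs.length_mul_simple z i with hz | hz
        · -- z ascent
          have hxs_zs : bruhatLE cs (x * s i) (z * s i) :=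
            (IH (ℓ z) hlz z x rfl hxz).1 (by omega) hxx
          have hstep : bruhatLE cs (z * s i) ((t * z) * s i) := by
            rw [hassoc]
            exact ble_of_step cs ht (by rw [← hassoc]; omega)
          exact ble_trans cs hxs_zs hstep
        · -- z descent
          have hx_zs : bruhatLE cs x (z * s i) :=
            (IH (ℓ z) hlz z x rfl hxz).2.1 (by omega) hxx
          have hz2 : ℓ (z * s i) < ℓ ((z * s i) * s i) := by rw [mss]; omega
          have hxs_z : bruhatLE cs (x * s i) ((z * s i) * s i) :=
            (IH (ℓ (z * s i)) (by omega) (z * s i) x rfl hx_zs).1 hz2 hxx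
          rw [mss] at hxs_z
          have hz_y : bruhatLE cs z (t * z) := ble_of_step cs ht hlz
          have hy_ys : bruhatLE cs (t * z) ((t * z) * s i) := ble_mul_simple_of_lt cs hyy
          exact ble_trans cs hxs_z (ble_trans cs hz_y hy_ys)
      -- Z2
      · intro hyy hxx
        have hys : ℓ ((t * z) * s i) + 1 = ℓ (t * z) := by
          rcases cs.length_mul_simple (t * z) i with hh | hh
          · omega
          · exact hh
        rcases cs.length_mul_simple z i with hz | hz
        · -- z ascent
          by_cases hc : ℓ (z * s i) < ℓ (t * (z * s i))
          · have c1 : bruhatLE cs z (z * s i) := ble_mul_simple_of_lt cs (by omega)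
            have c2 : bruhatLE cs (z * s i) (t * (z * s i)) := ble_of_step cs ht hc
            rw [hassoc]
            exact ble_trans cs hxz (ble_trans cs c1 c2)
          · -- trick case
            have hne : ℓ (t * (z * s i)) ≠ ℓ (z * s i) := ht.length_mul_right_ne (z * s i)
            have h1 : ℓ (t * (z * s i)) + 1 = ℓ (z * s i) := by
              rw [← hassoc]
              rw [← hassoc] at hc hne
              omega
            have h2 : ℓ (t * (z * s i)) < ℓ (t * (z * s i) * s i) := by
              rw [show t * (z * s i) * s i = t * z by rw [← hassoc, mss]]
              rw [← hassoc]
              omega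
            have heq : t * (z * s i) = (z * s i) * s i :=
              trick cs ht (by rw [mss]; omega) h1 h2
            rw [mss] at heq
            rw [hassoc, heq]
            exact hxz
        · -- z descent
          have hx_zs : bruhatLE cs x (z * s i) :=
            (IH (ℓ z) hlz z x rfl hxz).2.1 (by omega) hxx
          have hstep : bruhatLE cs (z * s i) ((t * z) * s i) := by
            rw [hassoc]
            exact ble_of_step cs ht (by rw [← hassoc]; omega)
          exact ble_trans cs hx_zs hstep
      -- Z3
      · intro hyy hxx
        have hys : ℓ ((t * z) * s i) + 1 = ℓ (t * z) := by
          rcases cs.length_mul_simple (t * z) i with hh | hh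
          · omega
          · exact hh
        rcases cs.length_mul_simple z i with hz | hz
        · -- z ascent
          have hxs_x : bruhatLE cs (x * s i) x := ble_simple_mul_of_gt cs hxx
          have hxs_z : bruhatLE cs (x * s i) z := ble_trans cs hxs_x hxz
          by_cases hc : ℓ (z * s i) < ℓ (t * (z * s i))
          · have hx_zs : bruhatLE cs ((x * s i) * s i) (z * s i) :=
              (IH (ℓ z) hlz z (x * s i) rfl hxs_z).1 (by omega) (by rw [mss]; omega)
            rw [mss] at hx_zs
            have c2 : bruhatLE cs (z * s i) (t * (z * s i)) := ble_of_step cs ht hc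
            rw [hassoc]
            exact ble_trans cs hxs_x (ble_trans cs hx_zs c2)
          · have hne : ℓ (t * (z * s i)) ≠ ℓ (z * s i) := ht.length_mul_right_ne (z * s i)
            have h1 : ℓ (t * (z * s i)) + 1 = ℓ (z * s i) := by
              rw [← hassoc]
              rw [← hassoc] at hc hne
              omega
            have h2 : ℓ (t * (z * s i)) < ℓ (t * (z * s i) * s i) := by
              rw [show t * (z * s i) * s i = t * z by rw [← hassoc, mss]]
              rw [← hassoc]
              omega
            have heq : t * (z * s i) = (z * s i) * s i :=
              trick cs ht (by rw [mss]; omega) h1 h2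
            rw [mss] at heq
            rw [hassoc, heq]
            exact hxs_z
        · -- z descent
          have hxs_zs : bruhatLE cs (x * s i) (z * s i) :=
            (IH (ℓ z) hlz z x rfl hxz).2.2 (by omega) hxx
          have hstep : bruhatLE cs (z * s i) ((t * z) * s i) := by
            rw [hassoc]
            exact ble_of_step cs ht (by rw [← hassoc]; omega)
          exact ble_trans cs hxs_zs hstep

lemma Z1 {x y : W} {i : B} (hxy : bruhatLE cs x y) (hy : ℓ y < ℓ (y * s i))
    (hx : ℓ x < ℓ (x * s i)) : bruhatLE cs (x * s i) (y * s i) :=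
  (Zlemma cs i (ℓ y) y x rfl hxy).1 hy hx

lemma Z2 {x y : W} {i : B} (hxy : bruhatLE cs x y) (hy : ℓ (y * s i) < ℓ y)
    (hx : ℓ x < ℓ (x * s i)) : bruhatLE cs x (y * s i) :=
  (Zlemma cs i (ℓ y) y x rfl hxy).2.1 hy hx

lemma Z3 {x y : W} {i : B} (hxy : bruhatLE cs x y) (hy : ℓ (y * s i) < ℓ y)
    (hx : ℓ (x * s i) < ℓ x) : bruhatLE cs (x * s i) (y * s i) :=
  (Zlemma cs i (ℓ y) y x rfl hxy).2.2 hy hx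

/-- "right-a": if `x ≤ y` and `ys < y` then `xs ≤ y`. -/
lemma Za {x y : W} {i : B} (hxy : bruhatLE cs x y) (hy : ℓ (y * s i) < ℓ y) :
    bruhatLE cs (x * s i) y := by
  rcases cs.length_mul_simple x i with hx | hx
  · have h1 : bruhatLE cs x (y * s i) := Z2 cs hxy hy (by omega)
    have h2 : bruhatLE cs (x * s i) ((y * s i) * s i) :=
      Z1 cs h1 (by rw [mss]; omega) (by omega)
    rwa [mss] at h2
  · exact ble_trans cs (ble_simple_mul_of_gt cs (by omega)) hxy

/-- Descending step: if `u < w`, there is a reflection `t` with `u ≤ tw < w`. -/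
lemma descend : ∀ n (u w : W), ℓ w = n → bruhatLE cs u w → u ≠ w →
    ∃ t, cs.IsReflection t ∧ bruhatLE cs u (t * w) ∧ ℓ (t * w) < ℓ w := by
  intro n
  induction n using Nat.strong_induction_on with
  | _ n IH =>
    intro u w hn huw hne
    have hlt : ℓ u < ℓ w := by
      have := ble_length_le cs huw
      rcases this.lt_or_eq with h | h
      · exact h
      · exact absurd (ble_eq_of_length_ge cs huw (le_of_eq h.symm)) hne
    have hw1 : w ≠ 1 := by
      intro h
      rw [h, cs.length_one] at hlt
      omega
    obtain ⟨i, hi⟩ := cs.exists_rightDescent_of_ne_one hw1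
    rw [CoxeterSystem.IsRightDescent] at hi
    by_cases hu2 : bruhatLE cs u (w * s i)
    · refine ⟨w * s i * w⁻¹, (cs.isReflection_simple i).conj w, ?_, ?_⟩
      · rwa [show w * s i * w⁻¹ * w = w * s i by group]
      · rwa [show w * s i * w⁻¹ * w = w * s i by group]
    · have hud : ℓ (u * s i) < ℓ u := by
        rcases cs.length_mul_simple u i with hx | hx
        · exact absurd (Z2 cs huw hi (by omega)) hu2
        · omega
      have h3 : bruhatLE cs (u * s i) (w * s i) := Z3 cs huw hi hud
      have hne3 : u * s i ≠ w * s i := by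
        intro h
        apply hne
        have := congrArg (· * s i) h
        simpa [mss] using congrArg (· * s i) h
      obtain ⟨t, ht, h5, h6⟩ := IH (ℓ (w * s i)) (by omega) (u * s i) (w * s i) rfl h3 hne3
      have hzs : (t * (w * s i)) * s i = t * w := by
        rw [mul_assoc, mul_assoc, cs.simple_mul_simple_self, mul_one]
      rcases cs.length_mul_simple (t * (w * s i)) i with hz | hz
      · -- ascent
        have hfin : bruhatLE cs ((u * s i) * s i) ((t * (w * s i)) * s i) :=
          Z1 cs h5 (by omega) (by rw [mss]; omega)
        rw [mss, hzs] at hfin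
        refine ⟨t, ht, hfin, ?_⟩
        rw [← hzs]
        omega
      · -- descent: contradiction
        have : bruhatLE cs ((u * s i) * s i) (t * (w * s i)) := Za cs h5 (by omega)
        rw [mss] at this
        have hstep : bruhatLE cs (t * (w * s i)) (w * s i) := by
          have he9 : t * (t * (w * s i)) = w * s i := by
            rw [← mul_assoc, ht.mul_self, one_mul]
          have h9 := ble_of_step cs ht (show ℓ (t * (w * s i)) < ℓ (t * (t * (w * s i))) by
            rw [he9]; omega)
          rwa [he9] at h9
        exact absurd (ble_trans cs this hstep) hu2

/-- Ascending step: if `u < w`, there is a reflection `t` with `u < tu ≤ w`. -/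
lemma ascend : ∀ n (u w : W), ℓ w = n → bruhatLE cs u w → u ≠ w →
    ∃ t, cs.IsReflection t ∧ ℓ u < ℓ (t * u) ∧ bruhatLE cs (t * u) w := by
  intro n
  induction n using Nat.strong_induction_on with
  | _ n IH =>
    intro u w hn huw hne
    obtain ⟨t, ht, h1, h2⟩ := descend cs (ℓ w) u w rfl huw hne
    by_cases he : u = t * w
    · have htu : t * u = w := by rw [he, ← mul_assoc, ht.mul_self, one_mul]
      refine ⟨t, ht, ?_, ?_⟩
      · rw [htu, he]; exact h2
      · rw [htu]; exact Relation.ReflTransGen.refl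
    · obtain ⟨t', ht', h3, h4⟩ := IH (ℓ (t * w)) (by omega) u (t * w) rfl h1 he
      refine ⟨t', ht', h3, ble_trans cs h4 ?_⟩
      have := ble_of_step cs ht (show ℓ (t * w) < ℓ (t * (t * w)) by
        rw [← mul_assoc, ht.mul_self, one_mul]; omega)
      rwa [← mul_assoc, ht.mul_self, one_mul] at this


lemma conj_simple_step (w : W) (i : B) :
    (w * s i) * s i * (w * s i)⁻¹ = w * s i * w⁻¹ := by
  rw [mul_inv_rev, cs.inv_simple,
    show w * s i * s i * (s i * w⁻¹) = w * (s i * s i) * (s i * w⁻¹) by group,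
    cs.simple_mul_simple_self, mul_one, ← mul_assoc]

lemma conj_mul_self (z : W) (i : B) : (z * s i * z⁻¹) * (z * s i) = z := by
  rw [show z * s i * z⁻¹ * (z * s i) = z * (s i * s i) by group,
    cs.simple_mul_simple_self, mul_one]

variable {V : Type*} [AddCommGroup V] [Module ℝ V] (R : Realization cs V)

/-- If `s_β = s_γ s_δ s_γ` for positive roots, then `β ∈ span {γ, δ}`. -/
lemma real_conj_span {γ δ β : V} (hγ : γ ∈ R.pos) (hδ : δ ∈ R.pos) (hβ : β ∈ R.pos)
    (h : R.reflOf β = R.reflOf γ * R.reflOf δ * R.reflOf γ) :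
    β ∈ Submodule.span ℝ {γ, δ} := by
  have hT2 : R.reflOf γ * R.reflOf γ = 1 := (R.reflOf_isReflection γ hγ).mul_self
  set w : V := R.act (R.reflOf γ) δ with hw
  have hwv : w = δ - R.coroot γ δ • γ := R.act_reflOf γ hγ δ
  have hδ0 : δ ≠ 0 := by
    intro h0
    have := R.coroot_self δ hδ
    rw [h0, map_zero] at this
    norm_num at this
  have hw0 : w ≠ 0 := by
    intro h0
    exact hδ0 ((R.act (R.reflOf γ)).map_eq_zero_iff.mp (hw ▸ h0))
  have h2 : R.act (R.reflOf β) w = - w := by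
    have eTT : R.act (R.reflOf γ) w = δ := by
      have e0 : R.act (R.reflOf γ) w = (R.act (R.reflOf γ) * R.act (R.reflOf γ)) δ := rfl
      rw [e0, ← map_mul, hT2, map_one]
      rfl
    have eD : R.act (R.reflOf δ) δ = -δ := by
      rw [R.act_reflOf δ hδ δ, R.coroot_self δ hδ, two_smul]
      abel
    rw [h, map_mul, map_mul]
    show R.act (R.reflOf γ) (R.act (R.reflOf δ) (R.act (R.reflOf γ) w)) = -w
    rw [eTT, eD, map_neg]
  have h1 : R.act (R.reflOf β) w = w - R.coroot β w • β := R.act_reflOf β hβ w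
  have h3 : R.coroot β w • β = w + w := by
    have h4 : w - R.coroot β w • β = -w := by rw [← h1]; exact h2
    have h5 : R.coroot β w • β = w - -w := by rw [← h4]; abel
    rwa [sub_neg_eq_add] at h5
  have hc : R.coroot β w ≠ 0 := by
    intro h0
    rw [h0, zero_smul] at h3
    apply hw0
    have : (2 : ℝ) • w = 0 := by rw [two_smul]; exact h3.symm
    simpa using (smul_eq_zero.mp this).resolve_left (by norm_num)
  have hβeq : β = (R.coroot β w)⁻¹ • (w + w) := by
    rw [← h3, inv_smul_smul₀ hc]
  have hwmem : w ∈ Submodule.span ℝ ({γ, δ} : Set V) := by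
    rw [hwv]
    exact Submodule.sub_mem _
      (Submodule.subset_span (by simp))
      (Submodule.smul_mem _ _ (Submodule.subset_span (by simp)))
  rw [hβeq]
  exact Submodule.smul_mem _ _ (Submodule.add_mem _ hwmem hwmem)


lemma mem_edgeLabels {α : V} {u v x : W} (h1 : α ∈ R.pos) (h2 : bruhatLE cs u x)
    (h3 : bruhatLE cs (R.reflOf α * x) v) (h4 : ℓ x < ℓ (R.reflOf α * x)) :
    α ∈ edgeLabels cs R u v := ⟨h1, x, h2, h3, h4⟩

lemma edgeLabels_subset_AD {u v : W} : edgeLabels cs R u v ⊆ (AD cs R u v : Set V) :=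
  Submodule.subset_span

lemma AD_mono {u u' v v' : W} (hu : bruhatLE cs u u') (hv : bruhatLE cs v' v) :
    AD cs R u' v' ≤ AD cs R u v := by
  apply Submodule.span_mono
  rintro α ⟨hpos, x, hx1, hx2, hx3⟩
  exact ⟨hpos, x, ble_trans cs hu hx1, ble_trans cs hx2 hv, hx3⟩

lemma mem_AD_of_span_pair {u v : W} {γ δ β : V} (hγ : γ ∈ AD cs R u v)
    (hδ : δ ∈ AD cs R u v) (h : β ∈ Submodule.span ℝ ({γ, δ} : Set V)) :
    β ∈ AD cs R u v := by
  have : Submodule.span ℝ ({γ, δ} : Set V) ≤ AD cs R u v := by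
    rw [Submodule.span_le]
    rintro x (rfl | rfl)
    · exact hγ
    · exact hδ
  exact this h


lemma conj_mul_base (z : W) (i : B) : (z * s i * z⁻¹) * z = z * s i := by group

lemma conj_conj {t : W} (ht : cs.IsReflection t) (z : W) (i : B) :
    t * (z * s i * z⁻¹) * t = (t * z) * s i * (t * z)⁻¹ := by
  rw [mul_inv_rev, ht.inv]; group

lemma ble_length_lt_of_ne {u v : W} (h : bruhatLE cs u v) (hne : u ≠ v) : ℓ u < ℓ v := by
  rcases (ble_length_le cs h).lt_or_eq with h' | h'
  · exact h'
  · exact absurd (ble_eq_of_length_ge cs h (le_of_eq h'.symm)) hne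

lemma ble_vs_v {v : W} {i : B} (hv : ℓ (v * s i) < ℓ v) : bruhatLE cs (v * s i) v :=
  ble_simple_mul_of_gt cs hv

/-- Corner lemma I: the label of the edge `(vs, v)` lies in `AD(us, vs)`,
provided `u ≤ vs` and `s` is a descent of both `u` and `v`. -/
lemma cornerI (i : B) : ∀ n, ∀ u v : W, ℓ v = n →
    ℓ (u * s i) < ℓ u → ℓ (v * s i) < ℓ v → bruhatLE cs u (v * s i) →
    ∀ α ∈ R.pos, R.reflOf α = v * s i * v⁻¹ →
    α ∈ AD cs R (u * s i) (v * s i) := by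
  intro n
  induction n using Nat.strong_induction_on with
  | _ n IH =>
  intro u v hn hu hv huvs α hαpos hαrefl
  have hlvs : ℓ (v * s i) + 1 = ℓ v := by
    rcases cs.length_mul_simple v i with h | h
    · omega
    · exact h
  have hne : u ≠ v * s i := by
    intro h
    rw [h, mss] at hu
    omega
  obtain ⟨t', ht', hble', hlt'⟩ := descend cs (ℓ (v * s i)) u (v * s i) rfl huvs hne
  set z := t' * (v * s i) with hz
  have htz : t' * z = v * s i := by rw [hz, ← mul_assoc, ht'.mul_self, one_mul]
  have hz_vs : bruhatLE cs z (v * s i) := by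
    have h9 := ble_of_step cs ht' (show ℓ z < ℓ (t' * z) by rw [htz]; exact hlt')
    rwa [htz] at h9
  obtain ⟨γ, hγpos, hγrefl⟩ := R.reflOf_surjOn t' ht'
  have hγedge : γ ∈ edgeLabels cs R (u * s i) (v * s i) := by
    apply mem_edgeLabels cs R hγpos (x := z)
    · exact ble_trans cs (ble_simple_mul_of_gt cs hu) hble'
    · rw [hγrefl, htz]
      exact Relation.ReflTransGen.refl
    · rw [hγrefl, htz]; exact hlt'
  obtain ⟨δ, hδpos, hδrefl⟩ :=
    R.reflOf_surjOn (z * s i * z⁻¹) ((cs.isReflection_simple i).conj z)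
  have hrel : R.reflOf α = R.reflOf γ * R.reflOf δ * R.reflOf γ := by
    rw [hαrefl, hγrefl, hδrefl, conj_conj cs ht' z i, htz, conj_simple_step cs v i]
  have hδAD : δ ∈ AD cs R (u * s i) (v * s i) := by
    rcases cs.length_mul_simple z i with hzs | hzs
    · -- ascent of z : recurse with v' := z * s i
      have hrec := IH (ℓ (z * s i)) (by omega) u (z * s i) rfl hu
        (by rw [mss]; omega) (by rw [mss]; exact hble') δ hδpos
        (by rw [hδrefl, conj_simple_step cs z i])
      rw [mss] at hrec
      exact AD_mono cs R Relation.ReflTransGen.refl hz_vs hrec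
    · -- descent of z : direct edge (z*s, z)
      apply edgeLabels_subset_AD cs R
      apply mem_edgeLabels cs R hδpos (x := z * s i)
      · exact Z3 cs hble' (by omega) hu
      · rw [hδrefl, conj_mul_self]; exact hz_vs
      · rw [hδrefl, conj_mul_self]; omega
  exact mem_AD_of_span_pair cs R (edgeLabels_subset_AD cs R hγedge) hδAD
    (real_conj_span cs R hγpos hδpos hαpos hrel)

/-- Corner lemma II: the label of the edge `(us, u)` lies in `AD(u, v)`,
provided `u ≤ vs` and `s` is a descent of both `u` and `v`. -/
lemma cornerII (i : B) : ∀ n, ∀ u v : W, ℓ v - ℓ u = n →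
    ℓ (u * s i) < ℓ u → ℓ (v * s i) < ℓ v → bruhatLE cs u (v * s i) →
    ∀ α ∈ R.pos, R.reflOf α = u * s i * u⁻¹ →
    α ∈ AD cs R u v := by
  intro n
  induction n using Nat.strong_induction_on with
  | _ n IH =>
  intro u v hn hu hv huvs α hαpos hαrefl
  have hlvs : ℓ (v * s i) + 1 = ℓ v := by
    rcases cs.length_mul_simple v i with h | h
    · omega
    · exact h
  have hluvs : ℓ u ≤ ℓ (v * s i) := ble_length_le cs huvs
  by_cases he : u = v * s i
  · -- direct edge (u, v)
    apply edgeLabels_subset_AD cs R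
    apply mem_edgeLabels cs R hαpos (x := u)
    · exact Relation.ReflTransGen.refl
    · rw [hαrefl, conj_mul_base, he, mss]
      exact Relation.ReflTransGen.refl
    · rw [hαrefl, conj_mul_base, he, mss]
      omega
  · obtain ⟨t', ht', hlt', hble'⟩ := ascend cs (ℓ (v * s i)) u (v * s i) rfl huvs he
    set z := t' * u with hz
    have htz : t' * z = u := by rw [hz, ← mul_assoc, ht'.mul_self, one_mul]
    have hu_z : bruhatLE cs u z := ble_of_step cs ht' hlt'
    obtain ⟨γ, hγpos, hγrefl⟩ := R.reflOf_surjOn t' ht'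
    have hγedge : γ ∈ edgeLabels cs R u v := by
      apply mem_edgeLabels cs R hγpos (x := u)
      · exact Relation.ReflTransGen.refl
      · rw [hγrefl]
        exact ble_trans cs hble' (ble_vs_v cs hv)
      · rw [hγrefl]; exact hlt'
    obtain ⟨δ, hδpos, hδrefl⟩ :=
      R.reflOf_surjOn (z * s i * z⁻¹) ((cs.isReflection_simple i).conj z)
    have hrel : R.reflOf α = R.reflOf γ * R.reflOf δ * R.reflOf γ := by
      rw [hαrefl, hγrefl, hδrefl, conj_conj cs ht' z i, htz]
    have hδAD : δ ∈ AD cs R u v := by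
      rcases cs.length_mul_simple z i with hzs | hzs
      · -- ascent of z : direct edge (z, z*s)
        apply edgeLabels_subset_AD cs R
        apply mem_edgeLabels cs R hδpos (x := z)
        · exact hu_z
        · rw [hδrefl, conj_mul_base]
          have h9 : bruhatLE cs (z * s i) ((v * s i) * s i) :=
            Z1 cs hble' (by rw [mss]; omega) (by omega)
          rwa [mss] at h9
        · rw [hδrefl, conj_mul_base]; omega
      · -- descent of z : recurse at (z, v)
        have hlz : ℓ u < ℓ z := hlt'
        have hrec := IH (ℓ v - ℓ z) (by omega) z v rfl (by omega) hv hble' δ hδpos hδrefl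
        exact AD_mono cs R hu_z Relation.ReflTransGen.refl hrec
    exact mem_AD_of_span_pair cs R (edgeLabels_subset_AD cs R hγedge) hδAD
      (real_conj_span cs R hγpos hδpos hαpos hrel)

/-- Hard case I: an `xs`-type edge of `[u,v]` has its label in `AD(us, vs)`. -/
lemma lemI (i : B) {u v : W} (hu : ℓ (u * s i) < ℓ u) (hv : ℓ (v * s i) < ℓ v) :
    ∀ n, ∀ x : W, ℓ (v * s i) - ℓ x = n →
    bruhatLE cs u x → ℓ x < ℓ (x * s i) → bruhatLE cs (x * s i) v →
    ∀ α ∈ R.pos, R.reflOf α = x * s i * x⁻¹ →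
    α ∈ AD cs R (u * s i) (v * s i) := by
  intro n
  induction n using Nat.strong_induction_on with
  | _ n IH =>
  intro x hn hux hxasc hxsv α hαpos hαrefl
  by_cases hxs_vs : bruhatLE cs (x * s i) (v * s i)
  · -- direct edge (x, xs) in [us, vs]
    apply edgeLabels_subset_AD cs R
    apply mem_edgeLabels cs R hαpos (x := x)
    · exact ble_trans cs (ble_simple_mul_of_gt cs hu) hux
    · rw [hαrefl, conj_mul_base]; exact hxs_vs
    · rw [hαrefl, conj_mul_base]; exact hxasc
  · have hx_vs : bruhatLE cs x (v * s i) :=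
      Z2 cs (ble_trans cs (ble_mul_simple_of_lt cs hxasc) hxsv) hv hxasc
    by_cases hxe : x = v * s i
    · -- corner case
      have := cornerI cs R i (ℓ v) u v rfl hu hv (hxe ▸ hux) α hαpos
        (by rw [hαrefl, hxe, conj_simple_step cs v i])
      exact this
    · obtain ⟨t', ht', hlt', hble'⟩ := ascend cs (ℓ (v * s i)) x (v * s i) rfl hx_vs hxe
      set z := t' * x with hz
      have htz : t' * z = x := by rw [hz, ← mul_assoc, ht'.mul_self, one_mul]
      have hx_z : bruhatLE cs x z := ble_of_step cs ht' hlt'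
      obtain ⟨γ, hγpos, hγrefl⟩ := R.reflOf_surjOn t' ht'
      have hγedge : γ ∈ edgeLabels cs R (u * s i) (v * s i) := by
        apply mem_edgeLabels cs R hγpos (x := x)
        · exact ble_trans cs (ble_simple_mul_of_gt cs hu) hux
        · rw [hγrefl]; exact hble'
        · rw [hγrefl]; exact hlt'
      obtain ⟨δ, hδpos, hδrefl⟩ :=
        R.reflOf_surjOn (z * s i * z⁻¹) ((cs.isReflection_simple i).conj z)
      have hrel : R.reflOf α = R.reflOf γ * R.reflOf δ * R.reflOf γ := by
        rw [hαrefl, hγrefl, hδrefl, conj_conj cs ht' z i, htz]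
      have hδAD : δ ∈ AD cs R (u * s i) (v * s i) := by
        rcases cs.length_mul_simple z i with hzs | hzs
        · -- ascent of z : recurse at z
          have hzs_v : bruhatLE cs (z * s i) v := by
            have h9 : bruhatLE cs (z * s i) ((v * s i) * s i) :=
              Z1 cs hble' (by rw [mss]; omega) (by omega)
            rwa [mss] at h9
          have hlxz : ℓ x < ℓ z := hlt'
          have hlzvs : ℓ z ≤ ℓ (v * s i) := ble_length_le cs hble'
          exact IH (ℓ (v * s i) - ℓ z) (by omega) z rfl (ble_trans cs hux hx_z)
            (by omega) hzs_v δ hδpos hδrefl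
        · -- descent of z : direct edge (zs, z) in [us, vs]
          have hx_zs : bruhatLE cs x (z * s i) := Z2 cs hx_z (by omega) hxasc
          apply edgeLabels_subset_AD cs R
          apply mem_edgeLabels cs R hδpos (x := z * s i)
          · exact ble_trans cs (ble_simple_mul_of_gt cs hu) (ble_trans cs hux hx_zs)
          · rw [hδrefl, conj_mul_self]; exact hble'
          · rw [hδrefl, conj_mul_self]; omega
      exact mem_AD_of_span_pair cs R (edgeLabels_subset_AD cs R hγedge) hδAD
        (real_conj_span cs R hγpos hδpos hαpos hrel)

/-- Hard case II: an `xs`-type edge of `[us,vs]` has its label in `AD(u, v)`. -/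
lemma lemII (i : B) {u v : W} (hu : ℓ (u * s i) < ℓ u) (hv : ℓ (v * s i) < ℓ v) :
    ∀ n, ∀ x : W, ℓ x = n →
    bruhatLE cs (u * s i) x → ℓ x < ℓ (x * s i) → bruhatLE cs (x * s i) (v * s i) →
    ∀ α ∈ R.pos, R.reflOf α = x * s i * x⁻¹ →
    α ∈ AD cs R u v := by
  intro n
  induction n using Nat.strong_induction_on with
  | _ n IH =>
  intro x hn husx hxasc hxsvs α hαpos hαrefl
  by_cases hux : bruhatLE cs u x
  · -- direct edge (x, xs) in [u, v]
    apply edgeLabels_subset_AD cs R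
    apply mem_edgeLabels cs R hαpos (x := x)
    · exact hux
    · rw [hαrefl, conj_mul_base]
      exact ble_trans cs hxsvs (ble_vs_v cs hv)
    · rw [hαrefl, conj_mul_base]; exact hxasc
  · have hus_xs : bruhatLE cs (u * s i) (x * s i) :=
      ble_trans cs husx (ble_mul_simple_of_lt cs hxasc)
    have hu_xs : bruhatLE cs u (x * s i) := by
      have h9 : bruhatLE cs ((u * s i) * s i) (x * s i) :=
        Za cs hus_xs (by rw [mss]; omega)
      rwa [mss] at h9
    by_cases hue : u = x * s i
    · -- corner case : x = u * s
      have hxu : x = u * s i := by rw [hue, mss]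
      apply cornerII cs R i (ℓ v - ℓ u) u v rfl hu hv (hue ▸ hxsvs) α hαpos
      rw [hαrefl, hxu, conj_simple_step cs u i]
    · obtain ⟨t', ht', hble', hlt'⟩ := descend cs (ℓ (x * s i)) u (x * s i) rfl hu_xs hue
      set z := t' * (x * s i) with hz
      have htz : t' * z = x * s i := by rw [hz, ← mul_assoc, ht'.mul_self, one_mul]
      have hz_xs : bruhatLE cs z (x * s i) := by
        have h9 := ble_of_step cs ht' (show ℓ z < ℓ (t' * z) by rw [htz]; exact hlt')
        rwa [htz] at h9
      rcases cs.length_mul_simple z i with hzs | hzs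
      · -- ascent of z : contradiction
        have h9 : bruhatLE cs z ((x * s i) * s i) :=
          Z2 cs hz_xs (by rw [mss]; omega) (by omega)
        rw [mss] at h9
        exact absurd (ble_trans cs hble' h9) hux
      · -- descent of z
        obtain ⟨γ, hγpos, hγrefl⟩ := R.reflOf_surjOn t' ht'
        have hγedge : γ ∈ edgeLabels cs R u v := by
          apply mem_edgeLabels cs R hγpos (x := z)
          · exact hble'
          · rw [hγrefl, htz]
            exact ble_trans cs hxsvs (ble_vs_v cs hv)
          · rw [hγrefl, htz]; exact hlt'
        obtain ⟨δ, hδpos, hδrefl⟩ :=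
          R.reflOf_surjOn (z * s i * z⁻¹) ((cs.isReflection_simple i).conj z)
        have hrel : R.reflOf α = R.reflOf γ * R.reflOf δ * R.reflOf γ := by
          rw [hαrefl, hγrefl, hδrefl, conj_conj cs ht' z i, htz, conj_simple_step cs x i]
        have hδAD : δ ∈ AD cs R u v := by
          -- recurse at x' := z * s i
          have hlxxs : ℓ (x * s i) = ℓ x + 1 := by
            rcases cs.length_mul_simple x i with h | h
            · exact h
            · omega
          have hrec := IH (ℓ (z * s i)) (by omega) (z * s i) rfl
            (Z3 cs hble' (by omega) hu) (by rw [mss]; omega)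
            (by rw [mss]; exact ble_trans cs hz_xs hxsvs) δ hδpos
            (by rw [hδrefl, conj_simple_step cs z i])
          exact hrec
        exact mem_AD_of_span_pair cs R (edgeLabels_subset_AD cs R hγedge) hδAD
          (real_conj_span cs R hγpos hδpos hαpos hrel)

lemma mainFwd (i : B) {u v : W} (hu : ℓ (u * s i) < ℓ u) (hv : ℓ (v * s i) < ℓ v)
    {α : V} (hα : α ∈ edgeLabels cs R u v) :
    α ∈ AD cs R (u * s i) (v * s i) := by
  obtain ⟨hαpos, x, hux, hxv, hlen⟩ := hα
  have ht : cs.IsReflection (R.reflOf α) := R.reflOf_isReflection α hαpos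
  have hassoc : R.reflOf α * x * s i = R.reflOf α * (x * s i) := mul_assoc _ _ _
  rcases cs.length_mul_simple (R.reflOf α * x) i with hys | hys
  · -- ascent of y : direct edge (x, y) in [us, vs]
    apply edgeLabels_subset_AD cs R
    apply mem_edgeLabels cs R hαpos (x := x)
    · exact ble_trans cs (ble_simple_mul_of_gt cs hu) hux
    · exact Z2 cs hxv hv (by omega)
    · exact hlen
  · -- descent of y
    rcases cs.length_mul_simple x i with hxs | hxs
    · -- ascent of x
      by_cases hcase : ℓ (x * s i) < ℓ (R.reflOf α * x * s i)
      · -- edge (xs, ys) in [us, vs]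
        apply edgeLabels_subset_AD cs R
        apply mem_edgeLabels cs R hαpos (x := x * s i)
        · exact ble_trans cs (ble_simple_mul_of_gt cs hu)
            (ble_trans cs hux (ble_mul_simple_of_lt cs (by omega)))
        · rw [← hassoc]
          exact Z3 cs hxv hv (by omega)
        · rw [← hassoc]; exact hcase
      · -- degenerate : y = x * s
        have hx_ys : bruhatLE cs x ((R.reflOf α * x) * s i) :=
          Z2 cs (ble_of_step cs ht hlen) (by omega) (by omega)
        have hxys : x = (R.reflOf α * x) * s i := by
          by_contra hne
          have h1 : ℓ x < ℓ ((R.reflOf α * x) * s i) := ble_length_lt_of_ne cs hx_ys hne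
          have h2 : ℓ (R.reflOf α * (x * s i)) ≠ ℓ (x * s i) :=
            ht.length_mul_right_ne (x * s i)
          rw [← hassoc] at h2
          omega
        have hyxs : R.reflOf α * x = x * s i := by
          conv_lhs => rw [← mss cs (R.reflOf α * x) i, ← hxys]
        have htrefl : R.reflOf α = x * s i * x⁻¹ := by
          rw [show x * s i * x⁻¹ = (x * s i) * x⁻¹ from rfl, ← hyxs]
          group
        exact lemI cs R i hu hv (ℓ (v * s i) - ℓ x) x rfl hux (by omega)
          (by rw [← hyxs]; exact hxv) α hαpos htrefl
    · -- descent of x : edge (xs, ys) in [us, vs]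
      apply edgeLabels_subset_AD cs R
      apply mem_edgeLabels cs R hαpos (x := x * s i)
      · exact Z3 cs hux (by omega) hu
      · rw [← hassoc]
        exact Z3 cs hxv hv (by omega)
      · rw [← hassoc]; omega

lemma mainRev (i : B) {u v : W} (hu : ℓ (u * s i) < ℓ u) (hv : ℓ (v * s i) < ℓ v)
    {α : V} (hα : α ∈ edgeLabels cs R (u * s i) (v * s i)) :
    α ∈ AD cs R u v := by
  obtain ⟨hαpos, x, hux, hxv, hlen⟩ := hα
  have ht : cs.IsReflection (R.reflOf α) := R.reflOf_isReflection α hαpos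
  have hassoc : R.reflOf α * x * s i = R.reflOf α * (x * s i) := mul_assoc _ _ _
  rcases cs.length_mul_simple x i with hxs | hxs
  · -- ascent of x
    have hu_xs : bruhatLE cs u (x * s i) := by
      have h9 : bruhatLE cs ((u * s i) * s i) (x * s i) :=
        Za cs (ble_trans cs hux (ble_mul_simple_of_lt cs (by omega))) (by rw [mss]; omega)
      rwa [mss] at h9
    rcases cs.length_mul_simple (R.reflOf α * x) i with hys | hys
    · -- ascent of y : edge (xs, ys) in [u, v]
      apply edgeLabels_subset_AD cs R
      apply mem_edgeLabels cs R hαpos (x := x * s i)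
      · exact hu_xs
      · rw [← hassoc]
        have h9 : bruhatLE cs ((R.reflOf α * x) * s i) ((v * s i) * s i) :=
          Z1 cs hxv (by rw [mss cs v i]; omega) (by omega)
        rwa [mss cs v i] at h9
      · rw [← hassoc]; omega
    · -- descent of y
      by_cases hcase : ℓ (x * s i) < ℓ (R.reflOf α * x * s i)
      · -- edge (xs, ys) in [u, v]
        apply edgeLabels_subset_AD cs R
        apply mem_edgeLabels cs R hαpos (x := x * s i)
        · exact hu_xs
        · rw [← hassoc]
          exact Za cs (ble_trans cs hxv (ble_vs_v cs hv)) hv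
        · rw [← hassoc]; exact hcase
      · -- degenerate : y = x * s
        have hx_ys : bruhatLE cs x ((R.reflOf α * x) * s i) :=
          Z2 cs (ble_of_step cs ht hlen) (by omega) (by omega)
        have hxys : x = (R.reflOf α * x) * s i := by
          by_contra hne
          have h1 : ℓ x < ℓ ((R.reflOf α * x) * s i) := ble_length_lt_of_ne cs hx_ys hne
          have h2 : ℓ (R.reflOf α * (x * s i)) ≠ ℓ (x * s i) :=
            ht.length_mul_right_ne (x * s i)
          rw [← hassoc] at h2
          omega
        have hyxs : R.reflOf α * x = x * s i := by
          conv_lhs => rw [← mss cs (R.reflOf α * x) i, ← hxys]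
        have htrefl : R.reflOf α = x * s i * x⁻¹ := by
          rw [show x * s i * x⁻¹ = (x * s i) * x⁻¹ from rfl, ← hyxs]
          group
        exact lemII cs R i hu hv (ℓ x) x rfl hux (by omega)
          (by rw [← hyxs]; exact hxv) α hαpos htrefl
  · -- descent of x : edge (x, y) in [u, v]
    apply edgeLabels_subset_AD cs R
    apply mem_edgeLabels cs R hαpos (x := x)
    · have h9 : bruhatLE cs ((u * s i) * s i) x := Za cs hux (by omega)
      rwa [mss] at h9
    · exact ble_trans cs hxv (ble_vs_v cs hv)
    · exact hlen

theorem main (i : B) {u v : W} (hu : ℓ (u * s i) < ℓ u) (hv : ℓ (v * s i) < ℓ v) :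
    AD cs R u v = AD cs R (u * s i) (v * s i) := by
  apply _root_.le_antisymm
  · rw [AD, Submodule.span_le]
    intro α hα
    exact mainFwd cs R i hu hv hα
  · rw [AD, Submodule.span_le]
    intro α hα
    exact mainRev cs R i hu hv hα


end StmtAux

theorem stmt4 {B W : Type*} [Group W] [Finite W] {M : CoxeterMatrix B}
    (cs : CoxeterSystem M W) {V : Type*} [AddCommGroup V] [Module ℝ V]
    (R : Realization cs V) (u v : W) (i : B) (huv : bruhatLE cs u v)
    (hv : cs.length (v * cs.simple i) < cs.length v)
    (hu : cs.length (u * cs.simple i) < cs.length u) :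
    AD cs R u v = AD cs R (u * cs.simple i) (v * cs.simple i) :=
  StmtAux.main cs R i hu hv
end
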